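/- arXiv:2101.11504 — 4 statements merged into one kernel-verified Lean document; each statement's English description precedes it below -/
import Mathlib

section
/- The rows of Î_{n,k} form a basis of the row space of I_{n,k}; that is, the rows of Î_{n,k} are linearly independent and their span equals the span of the rows of I_{n,k}. -/
/-!
Let `m` be the largest element of `Fin n`. The rows of `Î_{n,k}` are the rows indexed by the
`k`-sets `Y` with `m ∉ Y`, and they are independent by triangularity: among them, only the row
of `Y` is nonzero in the column `insert m Y`. For the span, the boundary relation
`I_{n,k-1} I_{n,k} = 0`, read in the row of `W = Y \ {m}` for a `k`-set `Y ∋ m`, expresses the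
row of `Y` through the rows of `insert z W` with `z ≠ m`, none of which contains `m`.
-/

/-- The entry of the boundary matrix `I_{n,k}`: for a `k`-element subset `Y` and a
`(k+1)`-element subset `X = {x_0 < x_1 < ⋯ < x_k}` of `Fin n`, the entry is `(-1)^i` if
`Y = X \ {x_i}`, and `0` otherwise. -/
noncomputable def Ient (n k : ℕ) (Y X : Finset (Fin n)) : ℝ :=
  if Y ⊆ X ∧ Y.card = k ∧ X.card = k + 1 then
    (-1 : ℝ) ^ (X.filter (fun a => ∀ b ∈ X \ Y, a < b)).card
  else 0

open Finset

theorem linearIndependent_of_pivot {ι κ R : Type*} [Ring R] [NoZeroDivisors R]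
    (v : ι → κ → R) (c : ι → κ) (hdiag : ∀ i, v i (c i) ≠ 0)
    (hoff : ∀ i j, j ≠ i → v j (c i) = 0) : LinearIndependent R v := by
  rw [linearIndependent_iff']
  intro s g hg i hi
  have hci := congrFun hg (c i)
  simp only [Finset.sum_apply, Pi.smul_apply, smul_eq_mul, Pi.zero_apply] at hci
  rw [sum_eq_single_of_mem i hi fun j _ hj => by rw [hoff i j hj, mul_zero]] at hci
  exact (mul_eq_zero.mp hci).resolve_right (hdiag i)

theorem Submodule.mem_of_sum_smul_eq_zero {ι K M : Type*} [DivisionRing K] [AddCommGroup M]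
    [Module K M] {p : Submodule K M} {s : Finset ι} {c : ι → K} {v : ι → M} {i : ι}
    (hi : i ∈ s) (hc : c i ≠ 0) (hsum : ∑ j ∈ s, c j • v j = 0)
    (hp : ∀ j ∈ s, j ≠ i → c j ≠ 0 → v j ∈ p) : v i ∈ p := by
  classical
  have hrest : ∑ j ∈ s.erase i, c j • v j ∈ p := by
    refine p.sum_mem fun j hj => ?_
    by_cases hcj : c j = 0
    · rw [hcj, zero_smul]; exact p.zero_mem
    · exact p.smul_mem _ (hp j (mem_of_mem_erase hj) (ne_of_mem_erase hj) hcj)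
  rw [← add_sum_erase s _ hi, add_eq_zero_iff_eq_neg] at hsum
  rw [← p.smul_mem_iff hc, hsum]
  exact p.neg_mem hrest

noncomputable def boundaryRow (n k : ℕ) (Y : Finset (Fin n)) :
    {X : Finset (Fin n) // #X = k + 1} → ℝ :=
  fun X => Ient n k Y X

section Boundary

variable {n k : ℕ}

theorem Ient_ne_zero_iff {Y X : Finset (Fin n)} :
    Ient n k Y X ≠ 0 ↔ Y ⊆ X ∧ #Y = k ∧ #X = k + 1 := by
  unfold Ient
  split_ifs with h <;> simp [h]

theorem Ient_insert {Y : Finset (Fin n)} {x : Fin n} (hx : x ∉ Y) (hY : #Y = k) :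
    Ient n k Y (insert x Y) = (-1) ^ #{a ∈ Y | a < x} := by
  rw [Ient, if_pos ⟨subset_insert x Y, hY, by rw [card_insert_of_notMem hx, hY]⟩,
    insert_sdiff_cancel hx, filter_insert]
  simp

theorem Ient_mul_Ient_add_Ient_mul_Ient {W : Finset (Fin n)} {u v : Fin n} (hu : u ∉ W)
    (hv : v ∉ W) (huv : u < v) (hW : #W = k) :
    Ient n k W (insert u W) * Ient n (k + 1) (insert u W) (insert u (insert v W)) +
      Ient n k W (insert v W) * Ient n (k + 1) (insert v W) (insert u (insert v W)) = 0 := by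
  -- inserting `u < v` first puts one more element below `v`; the other sign exponents agree
  have hvu : v ∉ insert u W := by simp [hv, huv.ne']
  have huv' : u ∉ insert v W := by simp [hu, huv.ne]
  rw [Ient_insert huv' (by rw [card_insert_of_notMem hv, hW]), insert_comm u v,
    Ient_insert hvu (by rw [card_insert_of_notMem hu, hW]), Ient_insert hu hW, Ient_insert hv hW,
    filter_insert, if_pos huv, card_insert_of_notMem (by simp [hu]),
    filter_insert, if_neg huv.not_gt, pow_succ]
  ring

theorem sum_Ient_mul_Ient_insert_insert {W : Finset (Fin n)} {u v : Fin n} (hu : u ∉ W)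
    (hv : v ∉ W) (huv : u ≠ v) (hW : #W = k) :
    ∑ Y, Ient n k W Y * Ient n (k + 1) Y (insert u (insert v W)) = 0 := by
  have hsupp : ∀ Y, Y ∉ ({insert u W, insert v W} : Finset _) →
      Ient n k W Y * Ient n (k + 1) Y (insert u (insert v W)) = 0 := by
    intro Y hYpair
    by_contra hne
    obtain ⟨hWY, -, hY⟩ := Ient_ne_zero_iff.mp (left_ne_zero_of_mul hne)
    obtain ⟨y, hyW, rfl⟩ := exists_eq_insert_iff.mpr ⟨hWY, hW ▸ hY.symm⟩
    have hy : y ∈ insert u (insert v W) := (Ient_ne_zero_iff.mp (right_ne_zero_of_mul hne)).1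
      (mem_insert_self y W)
    simp only [mem_insert, hyW, or_false] at hy
    rcases hy with rfl | rfl <;> simp at hYpair
  have hne : insert u W ≠ insert v W := fun h => by
    have : u ∈ insert v W := h ▸ mem_insert_self u W
    simp [hu, huv] at this
  rw [← sum_subset (subset_univ _) fun Y _ hY => hsupp Y hY, sum_pair hne]
  rcases huv.lt_or_gt with h | h
  · exact Ient_mul_Ient_add_Ient_mul_Ient hu hv h hW
  · rw [add_comm, insert_comm u v]
    exact Ient_mul_Ient_add_Ient_mul_Ient hv hu h hW

theorem sum_Ient_mul_Ient (W X : Finset (Fin n)) :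
    ∑ Y, Ient n k W Y * Ient n (k + 1) Y X = 0 := by
  by_cases h : ∃ u v, u ∉ W ∧ v ∉ W ∧ u ≠ v ∧ #W = k ∧ X = insert u (insert v W)
  · obtain ⟨u, v, hu, hv, huv, hW, rfl⟩ := h
    exact sum_Ient_mul_Ient_insert_insert hu hv huv hW
  refine sum_eq_zero fun Y _ => ?_
  by_contra hne
  obtain ⟨hWY, hW, hY⟩ := Ient_ne_zero_iff.mp (left_ne_zero_of_mul hne)
  obtain ⟨hYX, -, hX⟩ := Ient_ne_zero_iff.mp (right_ne_zero_of_mul hne)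
  obtain ⟨y, hyW, rfl⟩ := exists_eq_insert_iff.mpr ⟨hWY, hW ▸ hY.symm⟩
  obtain ⟨x, hxY, rfl⟩ := exists_eq_insert_iff.mpr ⟨hYX, hY ▸ hX.symm⟩
  exact h ⟨x, y, fun hx => hxY (mem_insert_of_mem hx), hyW,
    fun hxy => hxY (hxy ▸ mem_insert_self y W), hW, rfl⟩

theorem linearIndependent_boundaryRow_of_notMem (m : Fin n) :
    LinearIndependent ℝ fun Y : {Y : Finset (Fin n) // #Y = k ∧ m ∉ Y} => boundaryRow n k Y.1 := by
  refine linearIndependent_of_pivot _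
    (fun Y => ⟨insert m Y.1, by rw [card_insert_of_notMem Y.2.2, Y.2.1]⟩) (fun Y => ?_) ?_
  · rw [boundaryRow, Ient_insert Y.2.2 Y.2.1]
    exact pow_ne_zero _ (by norm_num)
  · rintro ⟨Y, hY, hmY⟩ ⟨Z, hZ, hmZ⟩ hZY
    by_contra hne
    have hZY' : Z ⊆ Y := fun a ha =>
      (mem_insert.mp ((Ient_ne_zero_iff.mp hne).1 ha)).resolve_left (ne_of_mem_of_not_mem ha hmZ)
    exact hZY (Subtype.ext (eq_of_subset_of_card_le hZY' (by rw [hY, hZ])))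

theorem boundaryRow_mem_span_of_notMem (m : Fin n) {Y : Finset (Fin n)} (hY : #Y = k) :
    boundaryRow n k Y ∈ Submodule.span ℝ
      (Set.range fun Z : {Z : Finset (Fin n) // #Z = k ∧ m ∉ Z} => boundaryRow n k Z.1) := by
  by_cases hmY : m ∉ Y
  · exact Submodule.subset_span ⟨⟨Y, hY, hmY⟩, rfl⟩
  rw [not_not] at hmY
  obtain ⟨j, rfl⟩ : ∃ j, k = j + 1 := Nat.exists_eq_add_one.mpr (hY ▸ card_pos.mpr ⟨m, hmY⟩)
  have hW : #(Y.erase m) = j := by rw [card_erase_of_mem hmY, hY, Nat.add_sub_cancel]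
  refine Submodule.mem_of_sum_smul_eq_zero (mem_univ Y)
    (Ient_ne_zero_iff.mpr ⟨erase_subset m Y, hW, hY⟩) ?_ fun Z _ hZY hZ => ?_
  · funext X
    simpa [Finset.sum_apply, boundaryRow] using sum_Ient_mul_Ient (Y.erase m) X.1
  · obtain ⟨hWZ, -, hZ⟩ := Ient_ne_zero_iff.mp hZ
    refine Submodule.subset_span ⟨⟨Z, hZ, fun hmZ => hZY ?_⟩, rfl⟩
    rw [← insert_erase hmY]
    exact (eq_of_subset_of_card_le (insert_subset hmZ hWZ)
      (by rw [card_insert_of_notMem (notMem_erase m Y), hW, hZ])).symm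

theorem span_boundaryRow_of_notMem (m : Fin n) :
    Submodule.span ℝ
        (Set.range fun Y : {Y : Finset (Fin n) // #Y = k ∧ m ∉ Y} => boundaryRow n k Y.1) =
      Submodule.span ℝ (Set.range fun Y : {Y : Finset (Fin n) // #Y = k} => boundaryRow n k Y.1) :=
  le_antisymm (Submodule.span_mono (Set.range_subset_iff.mpr fun Y => ⟨⟨Y.1, Y.2.1⟩, rfl⟩))
    (Submodule.span_le.mpr (Set.range_subset_iff.mpr fun Y => boundaryRow_mem_span_of_notMem m Y.2))

end Boundary

theorem stmt1_general (n k : ℕ) (hkn : k < n) :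
    LinearIndependent ℝ
      (fun (Y : {Y : Finset (Fin n) // Y.card = k ∧ ∀ a ∈ Y, (a : ℕ) < n - 1}) =>
        (fun (X : {X : Finset (Fin n) // X.card = k + 1}) => Ient n k Y.1 X.1)) ∧
    Submodule.span ℝ
      (Set.range (fun (Y : {Y : Finset (Fin n) // Y.card = k ∧ ∀ a ∈ Y, (a : ℕ) < n - 1}) =>
        (fun (X : {X : Finset (Fin n) // X.card = k + 1}) => Ient n k Y.1 X.1)))
    = Submodule.span ℝ
      (Set.range (fun (Y : {Y : Finset (Fin n) // Y.card = k}) =>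
        (fun (X : {X : Finset (Fin n) // X.card = k + 1}) => Ient n k Y.1 X.1))) := by
  let m : Fin n := ⟨n - 1, by omega⟩
  have hm : (fun Y : Finset (Fin n) => #Y = k ∧ ∀ a ∈ Y, (a : ℕ) < n - 1) =
      fun Y => #Y = k ∧ m ∉ Y := by
    funext Y
    refine propext (and_congr_right fun _ => ⟨fun h hmY => (h m hmY).false, fun h a ha => ?_⟩)
    exact lt_of_le_of_ne (Nat.le_sub_one_of_lt a.2) fun ham => h (Fin.ext ham (b := m) ▸ ha)
  rw [hm]
  exact ⟨linearIndependent_boundaryRow_of_notMem m, span_boundaryRow_of_notMem m⟩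

/-- The rows of `Î_{n,k}` (the rows of `I_{n,k}` indexed by `k`-element subsets of
`{1,…,n-1}`) are linearly independent, and their span equals the span of all the rows
of `I_{n,k}`. -/
theorem stmt1 (n k : ℕ) (hk : 1 ≤ k) (hkn : k < n) :
    LinearIndependent ℝ
      (fun (Y : {Y : Finset (Fin n) // Y.card = k ∧ ∀ a ∈ Y, (a : ℕ) < n - 1}) =>
        (fun (X : {X : Finset (Fin n) // X.card = k + 1}) => Ient n k Y.1 X.1)) ∧
    Submodule.span ℝ
      (Set.range (fun (Y : {Y : Finset (Fin n) // Y.card = k ∧ ∀ a ∈ Y, (a : ℕ) < n - 1}) =>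
        (fun (X : {X : Finset (Fin n) // X.card = k + 1}) => Ient n k Y.1 X.1)))
    = Submodule.span ℝ
      (Set.range (fun (Y : {Y : Finset (Fin n) // Y.card = k}) =>
        (fun (X : {X : Finset (Fin n) // X.card = k + 1}) => Ient n k Y.1 X.1))) :=
  stmt1_general n k hkn
end

section
/- Let B be a real r×m matrix with linearly independent rows, and let P = Bᵀ(B Bᵀ)⁻¹ B be the orthogonal projection onto the row space of B, with entries p_{ij} for i, j ∈ {1,…,m}. Then for every subset F of {1,…,m}, the sum over all r-element subsets X of {1,…,m} containing F of det(B[X])² is at most det(B Bᵀ) · ∏_{i∈F} p_{ii}, where B[X] is the submatrix of B given by the columns indexed by X. -/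
/-!
Replacing `B` by `S⁻¹ B`, where `BBᵀ = SSᵀ`, multiplies every `det(B[X])²` and `det(BBᵀ)` by
`det(S)⁻²` and leaves `P` unchanged, so we may assume that the rows of `B` are orthonormal: then
`det(BBᵀ) = 1` and `P = BᵀB`. We induct on `r`. For `i ∈ F`, an orthogonal change of rows makes
column `i` a multiple of the first unit vector; expanding along that column gives
`det(B[X])² = p_ii · det(B'[X \ {i}])²`, where `B'` consists of the remaining `r - 1` orthonormal
rows, and the diagonal of `B'ᵀB'` is dominated by that of `BᵀB`. For `F = ∅`, average the
singleton bounds: `∑ᵢ ν({X ∋ i}) = r · ν(everything)`, while `∑ᵢ p_ii = tr P = r`.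
-/

open Matrix

/-- `det(B[X])²` for a set `X` of columns of `B`: the square of the determinant of the
submatrix of `B` given by the columns indexed by `X` (in increasing order), defined to be
`0` unless `|X| = r`. -/
noncomputable def detSq {r m : ℕ} (B : Matrix (Fin r) (Fin m) ℝ) (X : Finset (Fin m)) : ℝ :=
  if h : X.card = r then (B.submatrix id (X.orderEmbOfFin h)).det ^ 2 else 0

open Finset

section Gram

variable {R n ι : Type*} [CommRing R] [Fintype n] [DecidableEq n] [Fintype ι]

lemma mul_mul_transpose_mul_of_mul_transpose_eq_one (S : Matrix n n R) {A : Matrix n ι R}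
    (hA : A * Aᵀ = 1) : S * A * (S * A)ᵀ = S * Sᵀ := by
  rw [transpose_mul, Matrix.mul_assoc, ← Matrix.mul_assoc A, hA, Matrix.one_mul]

lemma transpose_mul_inv_mul_of_mul_transpose_eq_one {S : Matrix n n R} (hS : IsUnit S.det)
    {A : Matrix n ι R} (hA : A * Aᵀ = 1) :
    (S * A)ᵀ * (S * A * (S * A)ᵀ)⁻¹ * (S * A) = Aᵀ * A := by
  rw [mul_mul_transpose_mul_of_mul_transpose_eq_one S hA, Matrix.mul_inv_rev, transpose_mul]
  simp only [Matrix.mul_assoc]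
  rw [nonsing_inv_mul_cancel_left S A hS,
    mul_nonsing_inv_cancel_left Sᵀ A ((det_transpose S).symm ▸ hS)]

end Gram

open scoped MatrixOrder in
lemma exists_eq_mul_of_linearIndependent {n ι : Type*} [Fintype n] [DecidableEq n] [Fintype ι]
    (B : Matrix n ι ℝ) (hB : LinearIndependent ℝ fun i => B i) :
    ∃ (S : Matrix n n ℝ) (A : Matrix n ι ℝ), IsUnit S.det ∧ A * Aᵀ = 1 ∧ B = S * A := by
  have hN : (B * Bᵀ).PosDef := by
    simpa using PosDef.mul_conjTranspose_self B (vecMul_injective_iff.mpr hB)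
  obtain ⟨T, hT⟩ := CStarAlgebra.nonneg_iff_eq_star_mul_self.mp hN.posSemidef.nonneg
  rw [star_eq_conjTranspose, conjTranspose_eq_transpose_of_trivial] at hT
  have hS : IsUnit Tᵀ.det :=
    (left_ne_zero_of_mul (det_mul Tᵀ T ▸ hT ▸ hN.det_pos.ne')).isUnit
  have hT' : B * Bᵀ = Tᵀ * Tᵀᵀ := by rw [transpose_transpose, hT]
  refine ⟨Tᵀ, Tᵀ⁻¹ * B, hS, ?_, (mul_nonsing_inv_cancel_left _ _ hS).symm⟩
  rw [transpose_mul, Matrix.mul_assoc, ← Matrix.mul_assoc B, hT', transpose_nonsing_inv]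
  simp only [Matrix.mul_assoc]
  rw [mul_nonsing_inv _ ((det_transpose Tᵀ).symm ▸ hS), Matrix.mul_one, nonsing_inv_mul _ hS]

section Diagonal

variable {n ι : Type*} [Fintype n]

lemma transpose_mul_self_apply_self (A : Matrix n ι ℝ) (j : ι) :
    (Aᵀ * A) j j = ∑ k, A k j ^ 2 := by
  simp [mul_apply, sq]

lemma transpose_mul_self_apply_self_nonneg (A : Matrix n ι ℝ) (j : ι) : 0 ≤ (Aᵀ * A) j j := by
  rw [transpose_mul_self_apply_self]; positivity

lemma transpose_mul_self_apply_self_succ {s : ℕ} (C : Matrix (Fin (s + 1)) ι ℝ) (j : ι) :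
    (Cᵀ * C) j j = C 0 j ^ 2 + ((C.submatrix Fin.succ id)ᵀ * C.submatrix Fin.succ id) j j := by
  simp only [transpose_mul_self_apply_self, Fin.sum_univ_succ, submatrix_apply, id_eq]

lemma submatrix_succ_mul_transpose_eq_one [Fintype ι] {s : ℕ} (C : Matrix (Fin (s + 1)) ι ℝ)
    (hC : C * Cᵀ = 1) : C.submatrix Fin.succ id * (C.submatrix Fin.succ id)ᵀ = 1 := by
  rw [transpose_submatrix, ← submatrix_mul _ _ _ _ _ Function.bijective_id, hC,
    submatrix_one _ (Fin.succ_injective _)]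

lemma sum_diag_transpose_mul_self_of_mul_transpose_eq_one [DecidableEq n] [Fintype ι]
    (A : Matrix n ι ℝ) (hA : A * Aᵀ = 1) : ∑ j, (Aᵀ * A) j j = Fintype.card n := by
  change (Aᵀ * A).trace = _
  rw [trace_mul_comm, hA, trace_one]

end Diagonal

lemma exists_mul_transpose_eq_one_mulVec_apply_eq_zero {s : ℕ} (v : Fin (s + 1) → ℝ) :
    ∃ M : Matrix (Fin (s + 1)) (Fin (s + 1)) ℝ, M * Mᵀ = 1 ∧ ∀ k ≠ 0, (M *ᵥ v) k = 0 := by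
  by_cases hv : v = 0
  · exact ⟨1, by simp, by simp [hv]⟩
  set w : EuclideanSpace ℝ (Fin (s + 1)) := WithLp.toLp 2 v
  have hw : ‖w‖ ≠ 0 := by simpa [w] using hv
  have hu : Orthonormal ℝ (Set.domRestrict {0} fun _ : Fin (s + 1) => ‖w‖⁻¹ • w) := by
    refine ⟨fun _ => by simp [Set.domRestrict, norm_smul, hw], fun a b hab => ?_⟩
    exact absurd (Subtype.ext (a.2.trans b.2.symm)) hab
  -- the rows of `M` form an orthonormal basis whose first vector is `v / ‖v‖`
  obtain ⟨b, hb⟩ := hu.exists_orthonormalBasis_extension_of_card_eq (by simp)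
  have hinner (k l) : ∑ j, b k j * b l j = if k = l then 1 else 0 := by
    simpa [PiLp.inner_apply, mul_comm, eq_comm] using orthonormal_iff_ite.mp b.orthonormal k l
  refine ⟨of fun k j => b k j, ?_, fun k hk => ?_⟩
  · ext k l
    simp [mul_apply, one_apply, hinner]
  · have hwb : w = ‖w‖ • b 0 := by rw [hb 0 rfl, smul_smul, mul_inv_cancel₀ hw, one_smul]
    have hk0 := hinner k 0
    rw [if_neg hk] at hk0
    calc (of (fun k j => b k j) *ᵥ v) k = ∑ j, b k j * w j := rfl
      _ = 0 := by
        rw [hwb]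
        simp_rw [PiLp.smul_apply, smul_eq_mul, mul_left_comm _ ‖w‖, ← mul_sum, hk0, mul_zero]

section DetSq

variable {r s m : ℕ}

lemma detSq_nonneg (B : Matrix (Fin r) (Fin m) ℝ) (X : Finset (Fin m)) : 0 ≤ detSq B X := by
  unfold detSq; split <;> positivity

lemma detSq_mul_left (M : Matrix (Fin r) (Fin r) ℝ) (B : Matrix (Fin r) (Fin m) ℝ)
    (X : Finset (Fin m)) : detSq (M * B) X = M.det ^ 2 * detSq B X := by
  unfold detSq
  split
  · rw [submatrix_mul M B id id _ Function.bijective_id, submatrix_id_id, det_mul, mul_pow]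
  · rw [mul_zero]

lemma detSq_eq_sq_mul_detSq_erase (C : Matrix (Fin (s + 1)) (Fin m) ℝ) {i : Fin m}
    (hC : ∀ k ≠ 0, C k i = 0) {X : Finset (Fin m)} (hX : X.card = s + 1) (hi : i ∈ X) :
    detSq C X = C 0 i ^ 2 * detSq (C.submatrix Fin.succ id) (X.erase i) := by
  set e := X.orderEmbOfFin hX
  obtain ⟨k, hk⟩ : ∃ k, e k = i := by
    rw [← Set.mem_range, range_orderEmbOfFin]; exact hi
  have hX' : (X.erase i).card = s := by rw [card_erase_of_mem hi, hX]; rfl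
  have he : (X.erase i).orderEmbOfFin hX' = fun x => e (k.succAbove x) := by
    refine (orderEmbOfFin_unique hX' (fun x => ?_) (e.strictMono.comp k.strictMono_succAbove)).symm
    rw [mem_erase, ← hk]
    exact ⟨fun h => k.succAbove_ne x (e.injective h), orderEmbOfFin_mem X hX _⟩
  have hdet : (C.submatrix id e).det = (-1) ^ (k : ℕ) * C 0 i *
      ((C.submatrix Fin.succ id).submatrix id ((X.erase i).orderEmbOfFin hX')).det := by
    rw [det_succ_column _ k, Finset.sum_eq_single 0 (fun l _ hl => by simp [hk, hC l hl])
      (by simp)]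
    simp [hk, he, submatrix_submatrix, Function.comp_def]
  unfold detSq
  rw [dif_pos hX, dif_pos hX', hdet, mul_pow, mul_pow, ← pow_mul, mul_comm _ 2, pow_mul,
    neg_one_sq, one_pow, one_mul]

-- `det(AAᵀ) · ν_A({X : F ⊆ X})` for the determinantal measure `ν_A`
noncomputable def supersetDetSqSum (A : Matrix (Fin r) (Fin m) ℝ) (F : Finset (Fin m)) : ℝ :=
  ∑ X ∈ univ.filter (fun X : Finset (Fin m) => X.card = r ∧ F ⊆ X), detSq A X

lemma supersetDetSqSum_eq_zero_of_lt_card (A : Matrix (Fin r) (Fin m) ℝ)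
    {F : Finset (Fin m)} (hF : r < F.card) : supersetDetSqSum A F = 0 := by
  refine sum_eq_zero fun X hX => absurd (card_le_card (mem_filter.1 hX).2.2) ?_
  rw [(mem_filter.1 hX).2.1]; omega

lemma supersetDetSqSum_fin_zero_empty (A : Matrix (Fin 0) (Fin m) ℝ) :
    supersetDetSqSum A ∅ = 1 := by
  simp [supersetDetSqSum, detSq]

lemma sum_supersetDetSqSum_singleton (A : Matrix (Fin r) (Fin m) ℝ) :
    ∑ i, supersetDetSqSum A {i} = r * supersetDetSqSum A ∅ := by
  set T := univ.filter (fun X : Finset (Fin m) => X.card = r)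
  calc ∑ i, supersetDetSqSum A {i} = ∑ i, ∑ X ∈ T, if i ∈ X then detSq A X else 0 := by
        simp_rw [supersetDetSqSum, singleton_subset_iff, ← sum_filter, T, filter_filter]
    _ = ∑ X ∈ T, r * detSq A X := by
        rw [sum_comm]
        refine sum_congr rfl fun X hX => ?_
        rw [sum_ite_mem, univ_inter, sum_const, (mem_filter.1 hX).2, nsmul_eq_mul]
    _ = r * supersetDetSqSum A ∅ := by simp [supersetDetSqSum, T, mul_sum]

lemma supersetDetSqSum_le_sq_mul_erase (C : Matrix (Fin (s + 1)) (Fin m) ℝ) {i : Fin m}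
    (hC : ∀ k ≠ 0, C k i = 0) {F : Finset (Fin m)} (hi : i ∈ F) :
    supersetDetSqSum C F ≤ C 0 i ^ 2 * supersetDetSqSum (C.submatrix Fin.succ id) (F.erase i) := by
  set S := univ.filter (fun X : Finset (Fin m) => X.card = s + 1 ∧ F ⊆ X)
  have hS : ∀ X ∈ S, X.card = s + 1 ∧ F ⊆ X := fun X hX => (mem_filter.1 hX).2
  calc supersetDetSqSum C F
      = ∑ Y ∈ S.image (·.erase i), C 0 i ^ 2 * detSq (C.submatrix Fin.succ id) Y := by
        rw [sum_image fun X hX Y hY => erase_injOn' i ((hS X hX).2 hi) ((hS Y hY).2 hi)]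
        exact sum_congr rfl fun X hX =>
          detSq_eq_sq_mul_detSq_erase C hC (hS X hX).1 ((hS X hX).2 hi)
    _ ≤ _ := by
        rw [supersetDetSqSum, mul_sum]
        refine sum_le_sum_of_subset_of_nonneg (fun Y hY => ?_)
          fun Y _ _ => mul_nonneg (sq_nonneg _) (detSq_nonneg _ _)
        obtain ⟨X, hX, rfl⟩ := mem_image.1 hY
        obtain ⟨hXc, hFX⟩ := hS X hX
        refine mem_filter.2 ⟨mem_univ _, ?_, erase_subset_erase i hFX⟩
        rw [card_erase_of_mem (hFX hi), hXc]; rfl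

lemma supersetDetSqSum_empty_le_one (A : Matrix (Fin (s + 1)) (Fin m) ℝ) (hA : A * Aᵀ = 1)
    (h : ∀ i, supersetDetSqSum A {i} ≤ (Aᵀ * A) i i) : supersetDetSqSum A ∅ ≤ 1 := by
  have hs : ((s + 1 : ℕ) : ℝ) * supersetDetSqSum A ∅ ≤ (s + 1 : ℕ) * 1 := by
    rw [← sum_supersetDetSqSum_singleton, mul_one]
    refine (sum_le_sum fun i _ => h i).trans_eq ?_
    rw [sum_diag_transpose_mul_self_of_mul_transpose_eq_one A hA, Fintype.card_fin]
  exact le_of_mul_le_mul_left hs (by positivity)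

lemma supersetDetSqSum_le_prod_of_mem
    (ih : ∀ A' : Matrix (Fin s) (Fin m) ℝ, A' * A'ᵀ = 1 →
      ∀ F, supersetDetSqSum A' F ≤ ∏ j ∈ F, (A'ᵀ * A') j j)
    {A : Matrix (Fin (s + 1)) (Fin m) ℝ} (hA : A * Aᵀ = 1) {F : Finset (Fin m)} {i : Fin m}
    (hi : i ∈ F) : supersetDetSqSum A F ≤ ∏ j ∈ F, (Aᵀ * A) j j := by
  obtain ⟨M, hM, hMi⟩ := exists_mul_transpose_eq_one_mulVec_apply_eq_zero fun k => A k i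
  have hC : M * A * (M * A)ᵀ = 1 := by
    rw [mul_mul_transpose_mul_of_mul_transpose_eq_one M hA, hM]
  have hCC : (M * A)ᵀ * (M * A) = Aᵀ * A := by
    rw [transpose_mul, Matrix.mul_assoc, ← Matrix.mul_assoc Mᵀ, mul_eq_one_comm.mp hM,
      Matrix.one_mul]
  have hdetM : M.det ^ 2 = 1 := by simpa [sq] using congrArg det hM
  set C := M * A
  set C₁ := C.submatrix Fin.succ id
  have hCi : ∀ k ≠ 0, C k i = 0 := hMi
  have hdiag (j : Fin m) : (Cᵀ * C) j j = C 0 j ^ 2 + (C₁ᵀ * C₁) j j :=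
    transpose_mul_self_apply_self_succ C j
  have hCi0 : C 0 i ^ 2 = (Aᵀ * A) i i := by
    rw [← hCC, hdiag, transpose_mul_self_apply_self C₁]
    simp [C₁, hCi]
  calc supersetDetSqSum A F = supersetDetSqSum C F := by
        simp [supersetDetSqSum, C, detSq_mul_left, hdetM]
    _ ≤ C 0 i ^ 2 * supersetDetSqSum C₁ (F.erase i) := supersetDetSqSum_le_sq_mul_erase C hCi hi
    _ ≤ (Aᵀ * A) i i * ∏ j ∈ F.erase i, (Aᵀ * A) j j := by
        rw [hCi0]
        refine mul_le_mul_of_nonneg_left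
          ((ih C₁ (submatrix_succ_mul_transpose_eq_one C hC) _).trans
            (prod_le_prod (fun j _ => transpose_mul_self_apply_self_nonneg C₁ j) fun j _ => ?_))
          (transpose_mul_self_apply_self_nonneg A i)
        rw [← hCC, hdiag]
        exact le_add_of_nonneg_left (sq_nonneg _)
    _ = ∏ j ∈ F, (Aᵀ * A) j j := mul_prod_erase F (fun j => (Aᵀ * A) j j) hi

theorem supersetDetSqSum_le_prod_of_mul_transpose_eq_one (A : Matrix (Fin r) (Fin m) ℝ)
    (hA : A * Aᵀ = 1) (F : Finset (Fin m)) :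
    supersetDetSqSum A F ≤ ∏ j ∈ F, (Aᵀ * A) j j := by
  induction r generalizing F with
  | zero =>
    rcases F.eq_empty_or_nonempty with rfl | hF
    · rw [supersetDetSqSum_fin_zero_empty, prod_empty]
    · rw [supersetDetSqSum_eq_zero_of_lt_card A hF.card_pos]
      exact prod_nonneg fun j _ => transpose_mul_self_apply_self_nonneg A j
  | succ s ih =>
    have hmem {F : Finset (Fin m)} {i : Fin m} (hi : i ∈ F) :=
      supersetDetSqSum_le_prod_of_mem ih hA hi
    rcases F.eq_empty_or_nonempty with rfl | ⟨i, hi⟩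
    · rw [prod_empty]
      exact supersetDetSqSum_empty_le_one A hA fun i => by
        simpa using hmem (mem_singleton_self i)
    · exact hmem hi

end DetSq

/-- For a real `r × m` matrix `B` with linearly independent rows, `P = Bᵀ(BBᵀ)⁻¹B` the
orthogonal projection onto the row space of `B`, and any `F ⊆ {1,…,m}`:
`∑_{X ⊇ F, |X| = r} det(B[X])² ≤ det(BBᵀ)·∏_{i ∈ F} p_{ii}`, i.e. the determinantal
measure `ν_B` satisfies `ν_B({X : F ⊆ X}) ≤ ∏_{i ∈ F} p_{ii}`. -/
theorem stmt4 (r m : ℕ) (B : Matrix (Fin r) (Fin m) ℝ)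
    (hB : LinearIndependent ℝ (fun i => B i))
    (F : Finset (Fin m)) :
    (∑ X ∈ Finset.univ.filter (fun X : Finset (Fin m) => X.card = r ∧ F ⊆ X), detSq B X)
      ≤ (B * Bᵀ).det * ∏ i ∈ F, (Bᵀ * (B * Bᵀ)⁻¹ * B) i i := by
  obtain ⟨S, A, hS, hA, rfl⟩ := exists_eq_mul_of_linearIndependent B hB
  have hdet : (S * A * (S * A)ᵀ).det = S.det ^ 2 := by
    rw [mul_mul_transpose_mul_of_mul_transpose_eq_one S hA, det_mul, det_transpose, sq]
  calc _ = S.det ^ 2 * supersetDetSqSum A F := by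
        simp only [detSq_mul_left, supersetDetSqSum, mul_sum]
    _ ≤ S.det ^ 2 * ∏ i ∈ F, (Aᵀ * A) i i := mul_le_mul_of_nonneg_left
        (supersetDetSqSum_le_prod_of_mul_transpose_eq_one A hA F) (sq_nonneg _)
    _ = _ := by rw [hdet, transpose_mul_inv_mul_of_mul_transpose_eq_one hS hA]
end

section
/- Let B be a real r×m matrix with linearly independent rows, and let P = Bᵀ(B Bᵀ)⁻¹ B with entries p_{ij}. Let A_1 and A_2 be disjoint subsets of {1,…,m} such that p_{ij} = 0 for all i ∈ A_1 and j ∈ A_2. Then for all S_1 ⊆ A_1 and S_2 ⊆ A_2, det(B Bᵀ) · (∑_{X : |X| = r, X∩A_1 = S_1, X∩A_2 = S_2} det(B[X])²) = (∑_{X : |X| = r, X∩A_1 = S_1} det(B[X])²) · (∑_{X : |X| = r, X∩A_2 = S_2} det(B[X])²), where all sums range over r-element subsets X of {1,…,m} and B[X] is the submatrix of B given by the columns indexed by X. -/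
/-!
Write `ν(E)` for the sum of `det(B[X])²` over the sets `X` in `E`, and `D_U` for the 0/1
diagonal projection onto the coordinates in `U`. Then `ν(all) = det(BBᵀ)` (Cauchy–Binet), and
deleting the columns in `U` gives `ν(X ∩ U = ∅) = det(B(1 - D_U)Bᵀ) = det(BBᵀ) · det(1 - D_U P)`.
For `U₁ ⊆ A₁` and `U₂ ⊆ A₂` the hypothesis says `D_{U₁} P D_{U₂} = 0`, hence
`1 - D_{U₁ ∪ U₂} P = (1 - D_{U₁} P)(1 - D_{U₂} P)`: the avoidance events of `A₁` are independent
of those of `A₂`. Inclusion–exclusion writes each event `X ∩ A = S` as a signed combination of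
avoidance events inside `A`, so the independence passes to `X ∩ A₁` and `X ∩ A₂`.
-/

open Matrix

open Finset

section InclusionExclusion

variable {α R : Type*} [DecidableEq α] [CommRing R]

theorem sum_powerset_neg_one_pow_mul_disjoint (S X : Finset α) :
    ∑ V ∈ S.powerset, (-1 : R) ^ #V * (if Disjoint X V then 1 else 0)
      = if S ⊆ X then 1 else 0 := by
  have hfilter : S.powerset.filter (Disjoint X) = (S \ X).powerset := by
    ext V
    simp [subset_sdiff, disjoint_comm]
  simp only [mul_ite, mul_one, mul_zero]
  rw [← sum_filter, hfilter]
  simp only [← sdiff_eq_empty_iff_subset]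
  simpa using congrArg (Int.cast : ℤ → R) (sum_powerset_neg_one_pow_card (x := S \ X))

theorem sum_inter_eq_alternating (s : Finset (Finset α)) (g : Finset α → R)
    {A S : Finset α} (hS : S ⊆ A) :
    ∑ X ∈ s with X ∩ A = S, g X
      = ∑ V ∈ S.powerset, (-1) ^ #V * ∑ X ∈ s with Disjoint X (V ∪ (A \ S)), g X := by
  have htrace : ∀ X : Finset α, X ∩ A = S ↔ S ⊆ X ∧ Disjoint X (A \ S) := by
    intro X
    simp only [Finset.ext_iff, subset_iff, disjoint_left, mem_inter, mem_sdiff]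
    grind
  calc ∑ X ∈ s with X ∩ A = S, g X
      = ∑ X ∈ s with Disjoint X (A \ S), (if S ⊆ X then 1 else 0) * g X := by
        simp only [boole_mul]
        rw [← sum_filter, filter_filter]
        simp only [htrace, and_comm]
    _ = ∑ X ∈ s with Disjoint X (A \ S),
          ∑ V ∈ S.powerset, (-1) ^ #V * (if Disjoint X V then g X else 0) := by
        refine sum_congr rfl fun X _ => ?_
        rw [← sum_powerset_neg_one_pow_mul_disjoint, sum_mul]
        refine sum_congr rfl fun V _ => ?_
        rw [mul_assoc, boole_mul]
    _ = _ := by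
        rw [sum_comm]
        refine sum_congr rfl fun V _ => ?_
        rw [← mul_sum, ← sum_filter, filter_filter]
        simp only [disjoint_union_right, and_comm]

theorem mul_sum_inter_eq_of_mul_sum_disjoint [Fintype α] (w : Finset α → R) (c : R)
    {A₁ A₂ : Finset α}
    (h : ∀ U₁ ⊆ A₁, ∀ U₂ ⊆ A₂, c * ∑ X with Disjoint X (U₁ ∪ U₂), w X
      = (∑ X with Disjoint X U₁, w X) * ∑ X with Disjoint X U₂, w X)
    {S₁ S₂ : Finset α} (hS₁ : S₁ ⊆ A₁) (hS₂ : S₂ ⊆ A₂) :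
    c * ∑ X with X ∩ A₁ = S₁ ∧ X ∩ A₂ = S₂, w X
      = (∑ X with X ∩ A₁ = S₁, w X) * ∑ X with X ∩ A₂ = S₂, w X := by
  have hjoint : ∀ U₁, ∑ X ∈ univ.filter (· ∩ A₂ = S₂) with Disjoint X U₁, w X
      = ∑ V ∈ S₂.powerset,
          (-1) ^ #V * ∑ X with Disjoint X (U₁ ∪ (V ∪ (A₂ \ S₂))), w X := by
    intro U₁
    rw [filter_comm, sum_inter_eq_alternating _ _ hS₂]
    simp only [filter_filter, disjoint_union_right]
  rw [← filter_filter, filter_comm, sum_inter_eq_alternating _ _ hS₁,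
    sum_inter_eq_alternating _ _ hS₁, sum_inter_eq_alternating _ _ hS₂, sum_mul_sum, mul_sum]
  refine sum_congr rfl fun V₁ hV₁ => ?_
  rw [hjoint, mul_sum, mul_sum]
  refine sum_congr rfl fun V₂ hV₂ => ?_
  have hU₁ : V₁ ∪ (A₁ \ S₁) ⊆ A₁ :=
    union_subset ((mem_powerset.1 hV₁).trans hS₁) sdiff_subset
  have hU₂ : V₂ ∪ (A₂ \ S₂) ⊆ A₂ :=
    union_subset ((mem_powerset.1 hV₂).trans hS₂) sdiff_subset
  linear_combination (-1) ^ #V₁ * (-1) ^ #V₂ * h _ hU₁ _ hU₂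

end InclusionExclusion

section coordProj

variable {ι R : Type*} [DecidableEq ι] [CommRing R]

variable (R) in
def coordProj (U : Finset ι) : Matrix ι ι R := diagonal fun j => if j ∈ U then 1 else 0

theorem coordProj_union {U₁ U₂ : Finset ι} (h : Disjoint U₁ U₂) :
    coordProj R (U₁ ∪ U₂) = coordProj R U₁ + coordProj R U₂ := by
  rw [coordProj, coordProj, coordProj, diagonal_add]
  congr 1 with j
  by_cases h₁ : j ∈ U₁
  · simp [h₁, disjoint_left.1 h h₁]
  · simp [h₁]

variable [Fintype ι]

theorem coordProj_compl (U : Finset ι) : coordProj R Uᶜ = 1 - coordProj R U := by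
  rw [coordProj, coordProj, ← diagonal_one, diagonal_sub]
  congr 1 with j
  by_cases hj : j ∈ U <;> simp [hj]

theorem coordProj_mul_transpose_self (U : Finset ι) :
    coordProj R U * (coordProj R U)ᵀ = coordProj R U := by
  rw [coordProj, diagonal_transpose, diagonal_mul_diagonal]
  congr 1 with j
  split_ifs <;> simp

theorem coordProj_mul_mul_coordProj {U₁ U₂ : Finset ι} {P : Matrix ι ι R}
    (hP : ∀ i ∈ U₁, ∀ j ∈ U₂, P i j = 0) :
    coordProj R U₁ * P * coordProj R U₂ = 0 := by
  ext i j
  simp only [coordProj, diagonal_mul, mul_diagonal, Matrix.zero_apply]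
  by_cases hi : i ∈ U₁ <;> by_cases hj : j ∈ U₂ <;> simp [hi, hj, hP]

theorem det_one_sub_coordProj_union_mul {U₁ U₂ : Finset ι} (h : Disjoint U₁ U₂)
    {P : Matrix ι ι R} (hP : ∀ i ∈ U₁, ∀ j ∈ U₂, P i j = 0) :
    (1 - coordProj R (U₁ ∪ U₂) * P).det
      = (1 - coordProj R U₁ * P).det * (1 - coordProj R U₂ * P).det := by
  have hfactor : 1 - coordProj R (U₁ ∪ U₂) * P
      = (1 - coordProj R U₁ * P) * (1 - coordProj R U₂ * P) := by
    rw [coordProj_union h]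
    simp only [Matrix.sub_mul, Matrix.mul_sub, Matrix.one_mul, Matrix.mul_one, Matrix.add_mul,
      ← Matrix.mul_assoc, coordProj_mul_mul_coordProj hP, Matrix.zero_mul]
    abel
  rw [hfactor, det_mul]

end coordProj

theorem det_submatrix_transpose_mul_self {r m : ℕ} (B : Matrix (Fin r) (Fin m) ℝ)
    {X : Finset (Fin m)} (h : #X = r) :
    ((Bᵀ * B).submatrix ((↑) : X → Fin m) (↑)).det
      = (B.submatrix id (X.orderEmbOfFin h)).det ^ 2 := by
  rw [← det_submatrix_equiv_self (X.orderIsoOfFin h).toEquiv, submatrix_submatrix]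
  have hreindex : (Bᵀ * B).submatrix (((↑) : X → Fin m) ∘ (X.orderIsoOfFin h).toEquiv)
      (((↑) : X → Fin m) ∘ (X.orderIsoOfFin h).toEquiv)
      = (B.submatrix id (X.orderEmbOfFin h))ᵀ * B.submatrix id (X.orderEmbOfFin h) := by
    ext i j
    simp [mul_apply]
  rw [hreindex, det_mul, det_transpose, sq]

theorem det_mul_transpose_eq_sum_detSq {r m : ℕ} (B : Matrix (Fin r) (Fin m) ℝ) :
    (B * Bᵀ).det = ∑ X, detSq B X := by
  -- the `X ^ r`-coefficients of `det (1 + X • BᵀB) = det (1 + X • BBᵀ)` are sums of `r × r`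
  -- principal minors: the squares `det(B[X])²` on the left, `det(BBᵀ)` alone on the right
  open Polynomial in
  have h := congrArg (coeff · r) (det_one_add_mul_comm ((X : ℝ[X]) • Bᵀ.map C) (B.map C))
  simp only [smul_mul, Matrix.mul_smul, ← Matrix.map_mul] at h
  rw [coeff_det_one_add_X_smul_eq_sum_minors, coeff_det_one_add_X_smul_eq_sum_minors] at h
  have hr : powersetCard r (univ : Finset (Fin r)) = {univ} := by
    simpa using powersetCard_self (univ : Finset (Fin r))
  have hu : ((B * Bᵀ).submatrix ((↑) : ↥(univ : Finset (Fin r)) → Fin r) (↑)).det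
      = (B * Bᵀ).det :=
    det_submatrix_equiv_self (Equiv.subtypeUnivEquiv mem_univ) _
  rw [hr, sum_singleton, hu] at h
  rw [← h, powersetCard_eq_filter, sum_filter]
  refine sum_congr rfl fun X _ => ?_
  unfold detSq
  split_ifs with hX
  · exact det_submatrix_transpose_mul_self B hX
  · rfl

theorem detSq_mul_diagonal {r m : ℕ} (B : Matrix (Fin r) (Fin m) ℝ) (d : Fin m → ℝ)
    (X : Finset (Fin m)) : detSq (B * diagonal d) X = (∏ j ∈ X, d j) ^ 2 * detSq B X := by
  unfold detSq
  split_ifs with hX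
  · have hsub : (B * diagonal d).submatrix id (X.orderEmbOfFin hX)
        = B.submatrix id (X.orderEmbOfFin hX) * diagonal (d ∘ X.orderEmbOfFin hX) := by
      ext i j
      simp
    rw [hsub, det_mul, det_diagonal, mul_pow, mul_comm]
    congr 2
    rw [← prod_coe_sort X]
    exact Fintype.prod_equiv (X.orderIsoOfFin hX).toEquiv _ _ (fun i => by simp)
  · simp

theorem sum_filter_disjoint_detSq {r m : ℕ} (B : Matrix (Fin r) (Fin m) ℝ)
    (hB : IsUnit (B * Bᵀ).det) (U : Finset (Fin m)) :
    ∑ X with Disjoint X U, detSq B X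
      = (B * Bᵀ).det * (1 - coordProj ℝ U * (Bᵀ * (B * Bᵀ)⁻¹ * B)).det := by
  have hzero : ∀ X, detSq (B * coordProj ℝ Uᶜ) X = if Disjoint X U then detSq B X else 0 := by
    intro X
    have hiff : (∀ j ∈ X, j ∈ Uᶜ) ↔ Disjoint X U := by simp [disjoint_left]
    rw [coordProj, detSq_mul_diagonal, prod_boole]
    simp only [hiff, ite_pow, one_pow, zero_pow two_ne_zero, ite_mul, one_mul, zero_mul]
  have hgram : B * coordProj ℝ Uᶜ * (B * coordProj ℝ Uᶜ)ᵀ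
      = B * Bᵀ * (1 - (B * Bᵀ)⁻¹ * B * (coordProj ℝ U * Bᵀ)) := by
    rw [transpose_mul, Matrix.mul_assoc, ← Matrix.mul_assoc (coordProj ℝ Uᶜ),
      coordProj_mul_transpose_self, coordProj_compl, Matrix.mul_sub, Matrix.mul_one,
      Matrix.mul_assoc (B * Bᵀ)⁻¹, mul_nonsing_inv_cancel_left _ _ hB, Matrix.sub_mul,
      Matrix.one_mul, Matrix.mul_sub]
  rw [sum_filter, ← sum_congr rfl fun X _ => hzero X, ← det_mul_transpose_eq_sum_detSq, hgram,
    det_mul, det_one_sub_mul_comm]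
  simp only [Matrix.mul_assoc]

theorem isUnit_det_mul_transpose {m n : Type*} [Fintype m] [Fintype n] [DecidableEq m]
    (B : Matrix m n ℝ) (hB : LinearIndependent ℝ (fun i => B i)) : IsUnit (B * Bᵀ).det :=
  (isUnit_iff_isUnit_det _).1 <| by
    simpa using (PosDef.mul_conjTranspose_self B (vecMul_injective_iff.2 hB)).isUnit

theorem sum_filter_card_and_detSq {r m : ℕ} (B : Matrix (Fin r) (Fin m) ℝ)
    (p : Finset (Fin m) → Prop) [DecidablePred p] :
    ∑ X with #X = r ∧ p X, detSq B X = ∑ X with p X, detSq B X := by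
  rw [← filter_filter, filter_comm]
  exact sum_filter_of_ne fun X _ hX => by_contra fun hr => hX (dif_neg hr)

/-- For a real `r × m` matrix `B` with linearly independent rows, `P = Bᵀ(BBᵀ)⁻¹B`, and
disjoint sets `A₁, A₂ ⊆ {1,…,m}` with `p_{ij} = 0` for all `i ∈ A₁`, `j ∈ A₂`: for all
`S₁ ⊆ A₁` and `S₂ ⊆ A₂`,
`det(BBᵀ)·∑_{|X|=r, X∩A₁=S₁, X∩A₂=S₂} det(B[X])²
  = (∑_{|X|=r, X∩A₁=S₁} det(B[X])²)·(∑_{|X|=r, X∩A₂=S₂} det(B[X])²)`,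
i.e. under `ν_B` the random sets `X ∩ A₁` and `X ∩ A₂` are independent. -/
theorem stmt5 (r m : ℕ) (B : Matrix (Fin r) (Fin m) ℝ)
    (hB : LinearIndependent ℝ (fun i => B i))
    (A₁ A₂ : Finset (Fin m)) (hd : Disjoint A₁ A₂)
    (hP : ∀ i ∈ A₁, ∀ j ∈ A₂, (Bᵀ * (B * Bᵀ)⁻¹ * B) i j = 0)
    (S₁ S₂ : Finset (Fin m)) (hS₁ : S₁ ⊆ A₁) (hS₂ : S₂ ⊆ A₂) :
    (B * Bᵀ).det *
      (∑ X ∈ Finset.univ.filter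
          (fun X : Finset (Fin m) => X.card = r ∧ X ∩ A₁ = S₁ ∧ X ∩ A₂ = S₂), detSq B X)
      = (∑ X ∈ Finset.univ.filter
            (fun X : Finset (Fin m) => X.card = r ∧ X ∩ A₁ = S₁), detSq B X) *
        (∑ X ∈ Finset.univ.filter
            (fun X : Finset (Fin m) => X.card = r ∧ X ∩ A₂ = S₂), detSq B X) := by
  have hG := isUnit_det_mul_transpose B hB
  simp only [sum_filter_card_and_detSq]
  refine mul_sum_inter_eq_of_mul_sum_disjoint (detSq B) _
    (fun U₁ hU₁ U₂ hU₂ => ?_) hS₁ hS₂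
  simp only [sum_filter_disjoint_detSq B hG]
  rw [det_one_sub_coordProj_union_mul (hd.mono hU₁ hU₂)
    fun i hi j hj => hP i (hU₁ hi) j (hU₂ hj)]
  ring
end

section
/- Let T and T' be proper subtrees of L_{n,k} such that T is a subtree of T' and every X ∈ V_k(T')∖V_k(T) has a neighbor in V(T). Let M be a complete matching of T, let U be the set of vertices of V_{k−1}(T) not covered by M, and for Y ∈ V_{k−1}(T) set Δ(Y) = deg_{T'}(Y) − deg_T(Y). Then the number of complete matchings M' of T' with M ⊆ M' equals (∏_{Y∈U} (Δ(Y)·k^{Δ(Y)−1} + k^{Δ(Y)})) · (∏_{Y∈V_{k−1}(T)∖U} k^{Δ(Y)}). -/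
/-!
Each new `(k+1)`-set `X ∈ V_k(T') \ V_k(T)` has exactly one `k`-subset in `T`, its anchor: a
second one would close a cycle through the connected `T` inside the tree `T'`. For the same
reason two new `(k+1)`-sets never share a `k`-subset outside `T`. Hence extending `M` to a
complete matching of `T'` amounts to choosing injectively, for each new `X`, a `k`-subset of `X`
not covered by `M`, and two choices can only collide when two new sets with the same anchor `Y`
both pick `Y`. Grouping the new sets by their anchor, the `Δ(Y)` sets over `Y` choose among their
`k` faces outside `T`, and when `Y ∈ U` at most one of them may pick `Y` instead: this gives
`k^Δ(Y)`, resp. `k^Δ(Y) + Δ(Y)·k^(Δ(Y)-1)`, extensions over `Y`.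
-/

/-- The bipartite graph `L_{n,k}`. -/
def Lgraph (n k : ℕ) : SimpleGraph (Finset (Fin n)) where
  Adj A B := (A.card = k ∧ B.card = k + 1 ∧ A ⊆ B) ∨ (B.card = k ∧ A.card = k + 1 ∧ B ⊆ A)
  symm := by
    refine ⟨fun A B h => ?_⟩
    tauto
  loopless := by
    refine ⟨fun A h => ?_⟩
    rcases h with ⟨h1, h2, -⟩ | ⟨h1, h2, -⟩ <;> omega

instance (n k : ℕ) : DecidableRel (Lgraph n k).Adj := fun A B =>
  decidable_of_iff
    ((A.card = k ∧ B.card = k + 1 ∧ A ⊆ B) ∨ (B.card = k ∧ A.card = k + 1 ∧ B ⊆ A))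
    Iff.rfl

/-- A proper subtree of `L_{n,k}`, given by its vertex set `t`. -/
def IsProperSubtree (n k : ℕ) (t : Finset (Finset (Fin n))) : Prop :=
  (∀ Z ∈ t, Z.card = k ∨ Z.card = k + 1) ∧
  ((Lgraph n k).induce (↑t : Set (Finset (Fin n)))).IsTree ∧
  (∀ X ∈ t, X.card = k + 1 → ∀ Y ⊆ X, Y.card = k → Y ∈ t)

/-- The degree of a vertex `Y` in the subgraph of `L_{n,k}` induced by the vertex set `t`. -/
def degIn (n k : ℕ) (t : Finset (Finset (Fin n))) (Y : Finset (Fin n)) : ℕ :=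
  (t.filter (fun Z => (Lgraph n k).Adj Y Z)).card

open Finset

section FunctionCount

variable {κ σ : Type*}

noncomputable def funCount (P : (κ → σ) → Prop) : ℕ := Nat.card {f : κ → σ // P f}

lemma funCount_congr {P Q : (κ → σ) → Prop} (h : ∀ f, P f ↔ Q f) : funCount P = funCount Q :=
  Nat.card_congr (Equiv.subtypeEquivRight h)

lemma funCount_forall_eq (d : σ) : funCount (fun f : κ → σ => ∀ x, f x = d) = 1 :=
  Nat.card_eq_one_iff_unique.mpr
    ⟨⟨fun f g => Subtype.ext (funext fun x => (f.2 x).trans (g.2 x).symm)⟩,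
      ⟨⟨fun _ => d, fun _ => rfl⟩⟩⟩

/-- Normalised to `d` off `A`, so that these are exactly the injective choice functions on `A`. -/
def IsInjChoice (A : Finset κ) (C : κ → Finset σ) (d : σ) (f : κ → σ) : Prop :=
  (∀ x ∈ A, f x ∈ C x) ∧ Set.InjOn f A ∧ ∀ x ∉ A, f x = d

lemma isInjChoice_congr {A : Finset κ} {C C' : κ → Finset σ} (h : ∀ x ∈ A, C x = C' x)
    (d : σ) (f : κ → σ) : IsInjChoice A C d f ↔ IsInjChoice A C' d f := by
  simp +contextual only [IsInjChoice, h]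

lemma funCount_or_exists [Finite κ] [Finite σ] {ι : Type*} (s : Finset ι)
    (P₀ : (κ → σ) → Prop) (P : ι → (κ → σ) → Prop) (h₀ : ∀ i ∈ s, ∀ f, P₀ f → ¬ P i f)
    (h : ∀ i ∈ s, ∀ j ∈ s, ∀ f, P i f → P j f → i = j) :
    funCount (fun f => P₀ f ∨ ∃ i ∈ s, P i f) = funCount P₀ + ∑ i ∈ s, funCount (P i) := by
  classical
  have := Fintype.ofFinite (κ → σ)
  have hunion : univ.filter (fun f => P₀ f ∨ ∃ i ∈ s, P i f) =
      univ.filter P₀ ∪ s.biUnion fun i => univ.filter (P i) := by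
    ext f
    simp
  simp only [funCount, Nat.card_eq_fintype_card, Fintype.card_subtype]
  rw [hunion, card_union_of_disjoint, card_biUnion]
  · exact fun i hi j hj hij => disjoint_filter.mpr fun f _ hi' hj' => hij (h i hi j hj f hi' hj')
  · exact (disjoint_biUnion_right _ _ _).mpr fun i hi =>
      disjoint_filter.mpr fun f _ h₀' hi' => h₀ i hi f h₀' hi'

variable [DecidableEq κ]

lemma funCount_and_eq_mul (s : Finset κ) (d : σ) {R T : (κ → σ) → Prop}
    (hR : ∀ f g : κ → σ, (∀ x ∈ s, f x = g x) → R f → R g)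
    (hT : ∀ f g : κ → σ, (∀ x ∉ s, f x = g x) → T f → T g) :
    funCount (fun f => R f ∧ T f) =
      funCount (fun f => R f ∧ ∀ x ∉ s, f x = d) *
        funCount (fun f => (∀ x ∈ s, f x = d) ∧ T f) := by
  rw [funCount, funCount, funCount, ← Nat.card_prod]
  refine Nat.card_congr
    { toFun := fun f =>
        (⟨fun x => if x ∈ s then f.1 x else d,
            hR f.1 _ (fun x hx => (if_pos hx).symm) f.2.1, fun x hx => if_neg hx⟩,
         ⟨fun x => if x ∈ s then d else f.1 x,
            fun x hx => if_pos hx, hT f.1 _ (fun x hx => (if_neg hx).symm) f.2.2⟩)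
      invFun := fun p => ⟨fun x => if x ∈ s then p.1.1 x else p.2.1 x,
        hR p.1.1 _ (fun x hx => (if_pos hx).symm) p.1.2.1,
        hT p.2.1 _ (fun x hx => (if_neg hx).symm) p.2.2.2⟩
      left_inv := fun f => Subtype.ext (funext fun x => by by_cases hx : x ∈ s <;> simp [hx])
      right_inv := ?_ }
  rintro ⟨⟨f₁, hf₁⟩, ⟨f₂, hf₂⟩⟩
  refine Prod.ext (Subtype.ext (funext fun x => ?_)) (Subtype.ext (funext fun x => ?_)) <;>
    by_cases hx : x ∈ s <;> simp [hx, hf₁.2 x, hf₂.1 x]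

lemma funCount_biUnion {ι : Type*} [DecidableEq ι] (B : Finset ι) (fib : ι → Finset κ)
    (hfib : (B : Set ι).PairwiseDisjoint fib) (Q : ι → (κ → σ) → Prop)
    (hQ : ∀ Y ∈ B, ∀ f g : κ → σ, (∀ x ∈ fib Y, f x = g x) → Q Y f → Q Y g) (d : σ) :
    funCount (fun f => (∀ Y ∈ B, Q Y f) ∧ ∀ x ∉ B.biUnion fib, f x = d) =
      ∏ Y ∈ B, funCount (fun f => Q Y f ∧ ∀ x ∉ fib Y, f x = d) := by
  induction B using Finset.induction_on with
  | empty => simpa using funCount_forall_eq d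
  | @insert Y B hY ih =>
    have hdisj : ∀ Y' ∈ B, ∀ x ∈ fib Y', x ∉ fib Y := fun Y' hY' x hx hxY =>
      (hY (hfib.elim_finset (by simp [hY']) (by simp) x hx hxY ▸ hY'))
    rw [prod_insert hY, ← ih (hfib.subset (by simp)) (fun Y' hY' => hQ Y' (by simp [hY']))]
    calc _ = funCount (fun f => Q Y f ∧
            ((∀ Y' ∈ B, Q Y' f) ∧ ∀ x ∉ (insert Y B).biUnion fib, f x = d)) :=
          funCount_congr fun f => by simp only [forall_mem_insert, and_assoc]
      _ = _ * funCount (fun f => (∀ x ∈ fib Y, f x = d) ∧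
            ((∀ Y' ∈ B, Q Y' f) ∧ ∀ x ∉ (insert Y B).biUnion fib, f x = d)) := by
          refine funCount_and_eq_mul (fib Y) d (hQ Y (by simp)) fun f g hfg ⟨hQB, hoff⟩ => ⟨?_, ?_⟩
          · exact fun Y' hY' => hQ Y' (by simp [hY']) f g
              (fun x hx => hfg x (hdisj Y' hY' x hx)) (hQB Y' hY')
          · intro x hx
            rw [← hfg x fun hxY => hx (mem_biUnion.mpr ⟨Y, by simp, hxY⟩)]
            exact hoff x hx
      _ = _ := by
          refine congrArg _ (funCount_congr fun f => ?_)
          simp only [biUnion_insert, mem_union, not_or]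
          constructor
          · rintro ⟨hY, hQB, hoff⟩
            exact ⟨hQB, fun x hx => if hxY : x ∈ fib Y then hY x hxY else hoff x ⟨hxY, hx⟩⟩
          · rintro ⟨hQB, hoff⟩
            refine ⟨fun x hx => hoff x fun h => ?_, hQB, fun x hx => hoff x hx.2⟩
            obtain ⟨Y', hY', hxY'⟩ := mem_biUnion.mp h
            exact hdisj Y' hY' x hxY' hx

lemma funCount_isInjChoice_biUnion {ι : Type*} [DecidableEq ι] (B : Finset ι)
    (fib : ι → Finset κ) (hfib : (B : Set ι).PairwiseDisjoint fib) (C : κ → Finset σ)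
    (hC : ∀ Y ∈ B, ∀ Y' ∈ B, ∀ x ∈ fib Y, ∀ x' ∈ fib Y', ¬ Disjoint (C x) (C x') → Y = Y')
    (d : σ) :
    funCount (IsInjChoice (B.biUnion fib) C d) =
      ∏ Y ∈ B, funCount (IsInjChoice (fib Y) C d) := by
  let Q : ι → (κ → σ) → Prop := fun Y f => (∀ x ∈ fib Y, f x ∈ C x) ∧ Set.InjOn f (fib Y)
  have hQ : ∀ Y ∈ B, ∀ f g : κ → σ, (∀ x ∈ fib Y, f x = g x) → Q Y f → Q Y g :=
    fun Y _ f g hfg ⟨hmem, hinj⟩ => ⟨fun x hx => hfg x hx ▸ hmem x hx,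
      fun x hx x' hx' h => hinj hx hx' (by rwa [hfg x hx, hfg x' hx'])⟩
  calc _ = funCount (fun f => (∀ Y ∈ B, Q Y f) ∧ ∀ x ∉ B.biUnion fib, f x = d) := ?_
    _ = _ := funCount_biUnion B fib hfib Q hQ d
    _ = _ := prod_congr rfl fun Y _ => funCount_congr fun f => and_assoc
  refine funCount_congr fun f => ?_
  simp only [IsInjChoice, Set.InjOn, coe_biUnion, Set.mem_iUnion, mem_coe, mem_biUnion]
  constructor
  · rintro ⟨hmem, hinj, hoff⟩
    exact ⟨fun Y hY => ⟨fun x hx => hmem x ⟨Y, hY, hx⟩,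
      fun x hx x' hx' => hinj ⟨Y, hY, hx⟩ ⟨Y, hY, hx'⟩⟩, hoff⟩
  · rintro ⟨hfib', hoff⟩
    refine ⟨fun x ⟨Y, hY, hx⟩ => (hfib' Y hY).1 x hx, ?_, hoff⟩
    rintro x ⟨Y, hY, hx⟩ x' ⟨Y', hY', hx'⟩ h
    obtain rfl := hC Y hY Y' hY' x hx x' hx'
      (not_disjoint_iff.mpr ⟨f x, (hfib' Y hY).1 x hx, h ▸ (hfib' Y' hY').1 x' hx'⟩)
    exact (hfib' Y hY).2 hx hx' h

lemma isInjChoice_insert_iff [DecidableEq σ] {A : Finset κ} {L : κ → Finset σ} {y d : σ}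
    {f : κ → σ} :
    IsInjChoice A (fun x => insert y (L x)) d f ↔
      IsInjChoice A L d f ∨ ∃ x ∈ A, IsInjChoice A (Function.update L x {y}) d f := by
  constructor
  · rintro ⟨hmem, hinj, hoff⟩
    by_cases hfy : ∃ x ∈ A, f x = y
    · obtain ⟨x, hx, hfx⟩ := hfy
      refine Or.inr ⟨x, hx, fun z hz => ?_, hinj, hoff⟩
      by_cases hzx : z = x
      · subst hzx
        simp [hfx]
      · rw [Function.update_of_ne hzx]
        exact (mem_insert.mp (hmem z hz)).resolve_left
          fun hfz => hzx (hinj hz hx (hfz.trans hfx.symm))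
    · push Not at hfy
      exact Or.inl ⟨fun z hz => (mem_insert.mp (hmem z hz)).resolve_left (hfy z hz), hinj, hoff⟩
  · rintro (⟨hmem, hf⟩ | ⟨x, -, hmem, hf⟩)
    · exact ⟨fun z hz => mem_insert_of_mem (hmem z hz), hf⟩
    · refine ⟨fun z hz => ?_, hf⟩
      by_cases hzx : z = x
      · subst hzx
        exact mem_insert.mpr (Or.inl (by simpa using hmem z hz))
      · simpa [hzx] using mem_insert_of_mem (hmem z hz)

variable [Fintype κ]

lemma funCount_isInjChoice_of_pairwiseDisjoint {A : Finset κ} {C : κ → Finset σ}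
    (hC : (A : Set κ).PairwiseDisjoint C) (d : σ) :
    funCount (IsInjChoice A C d) = ∏ x ∈ A, (C x).card := by
  classical
  let C' : κ → Finset σ := fun x => if x ∈ A then C x else {d}
  have key : ∀ f, IsInjChoice A C d f ↔ f ∈ Fintype.piFinset C' := by
    intro f
    simp only [IsInjChoice, Fintype.mem_piFinset, C']
    constructor
    · rintro ⟨hmem, -, hoff⟩ x
      split_ifs with hx
      exacts [hmem x hx, mem_singleton.mpr (hoff x hx)]
    · intro hf
      have hmem : ∀ x ∈ A, f x ∈ C x := fun x hx => by simpa [hx] using hf x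
      exact ⟨hmem, fun x hx x' hx' h => hC.elim_finset hx hx' (f x) (hmem x hx) (h ▸ hmem x' hx'),
        fun x hx => by simpa [hx] using hf x⟩
  rw [funCount, Nat.card_congr (Equiv.subtypeEquivRight key), Nat.card_eq_finsetCard,
    Fintype.card_piFinset, ← prod_subset (subset_univ A) fun x _ hx => by simp [C', hx]]
  exact prod_congr rfl fun x hx => by simp [C', hx]

lemma funCount_isInjChoice_insert [Finite σ] [DecidableEq σ] {A : Finset κ} {L : κ → Finset σ}
    (hL : (A : Set κ).PairwiseDisjoint L) {y : σ} (hy : ∀ x ∈ A, y ∉ L x) (d : σ) :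
    funCount (IsInjChoice A (fun x => insert y (L x)) d) =
      ∏ x ∈ A, (L x).card + ∑ x ∈ A, ∏ x' ∈ A.erase x, (L x').card := by
  have hLx : ∀ x ∈ A, (A : Set κ).PairwiseDisjoint (Function.update L x {y}) := by
    intro x hx z hz z' hz' hzz'
    by_cases hzx : z = x
    · subst hzx
      simp only [Function.onFun, Function.update_self, Function.update_of_ne (Ne.symm hzz')]
      exact disjoint_singleton_left.mpr (hy z' hz')
    by_cases hz'x : z' = x
    · subst hz'x
      simp only [Function.onFun, Function.update_self, Function.update_of_ne hzz']
      exact disjoint_singleton_right.mpr (hy z hz)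
    simpa only [Function.onFun, Function.update_of_ne hzx, Function.update_of_ne hz'x] using
      hL hz hz' hzz'
  have hcard : ∀ x ∈ A, ∏ z ∈ A, (Function.update L x {y} z).card =
      ∏ z ∈ A.erase x, (L z).card := fun x hx => by
    rw [← mul_prod_erase A _ hx, Function.update_self, card_singleton, one_mul]
    exact prod_congr rfl fun z hz => by rw [Function.update_of_ne (ne_of_mem_erase hz)]
  rw [funCount_congr fun f => isInjChoice_insert_iff,
    funCount_or_exists A _ _ (fun x hx f hf hfx => hy x hx ?_) (fun x hx x' hx' f hfx hfx' => ?_),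
    funCount_isInjChoice_of_pairwiseDisjoint hL,
    sum_congr rfl fun x hx => by
      rw [funCount_isInjChoice_of_pairwiseDisjoint (hLx x hx), hcard x hx]]
  · have hfx := hfx.1 x hx
    rw [Function.update_self, mem_singleton] at hfx
    exact hfx ▸ hf.1 x hx
  · have hx₁ := hfx.1 x hx
    have hx₂ := hfx'.1 x' hx'
    rw [Function.update_self, mem_singleton] at hx₁ hx₂
    exact hfx.2.1 hx hx' (hx₁.trans hx₂.symm)

end FunctionCount

namespace SimpleGraph

variable {V : Type*} {G : SimpleGraph V}

lemma Connected.induce_insert_of_adj {s : Set V} (hs : (G.induce s).Connected) {x y : V}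
    (hy : y ∈ s) (hxy : G.Adj x y) : (G.induce (insert x s)).Connected := by
  have := induce_union_connected (induce_pair_connected_of_adj hxy).preconnected hs.preconnected
    ⟨y, by simp, hy⟩
  rwa [Set.insert_union, Set.singleton_union, Set.insert_eq_of_mem hy] at this

/-- The edge `x y₁` is a bridge of the forest on `s'`, yet `x y₂` followed by a path through `s`
would join its ends. -/
lemma eq_of_adj_of_induce_connected {s s' : Set V} (hss' : s ⊆ s')
    (hs : (G.induce s).Connected) (hs' : (G.induce s').IsAcyclic) {x y₁ y₂ : V} (hx : x ∈ s')
    (hxs : x ∉ s) (hy₁ : y₁ ∈ s) (hy₂ : y₂ ∈ s) (h₁ : G.Adj x y₁) (h₂ : G.Adj x y₂) :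
    y₁ = y₂ := by
  by_contra hne
  let H := (G.induce s').deleteEdges {s(⟨x, hx⟩, ⟨y₁, hss' hy₁⟩)}
  let φ : G.induce s →g H :=
    { toFun := fun v => ⟨v, hss' v.2⟩
      map_rel' := fun {a b} hab => by
        simp only [H, deleteEdges_adj, comap_adj, Function.Embedding.coe_subtype,
          Set.mem_singleton_iff, Sym2.eq, Sym2.rel_iff', Prod.mk.injEq, Subtype.mk.injEq]
        exact ⟨hab, by grind⟩ }
  apply isAcyclic_iff_forall_adj_isBridge.mp hs'
    (show (G.induce s').Adj ⟨x, hx⟩ ⟨y₁, hss' hy₁⟩ from h₁)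
  have hxy₂ : H.Adj ⟨x, hx⟩ ⟨y₂, hss' hy₂⟩ := by
    simp only [H, deleteEdges_adj, comap_adj, Function.Embedding.coe_subtype,
      Set.mem_singleton_iff, Sym2.eq, Sym2.rel_iff', Prod.mk.injEq, Subtype.mk.injEq]
    exact ⟨h₂, by grind⟩
  exact hxy₂.reachable.trans ((hs.preconnected ⟨y₂, hy₂⟩ ⟨y₁, hy₁⟩).map φ)

lemma eq_of_adj_of_adj_of_induce_connected {s s' : Set V} (hss' : s ⊆ s')
    (hs : (G.induce s).Connected) (hs' : (G.induce s').IsAcyclic) {x₁ x₂ z y₁ y₂ : V}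
    (hx₁ : x₁ ∈ s') (hx₂ : x₂ ∈ s') (hz : z ∈ s') (hx₂s : x₂ ∉ s) (hzs : z ∉ s)
    (hy₁ : y₁ ∈ s) (hy₂ : y₂ ∈ s) (a₁ : G.Adj x₁ y₁) (a₂ : G.Adj x₂ y₂) (b₁ : G.Adj x₁ z)
    (b₂ : G.Adj x₂ z) : x₁ = x₂ := by
  by_contra hne
  have hconn : (G.induce (insert z (insert x₁ s))).Connected :=
    (hs.induce_insert_of_adj hy₁ a₁).induce_insert_of_adj (Set.mem_insert _ _) b₁.symm
  have hsub : insert z (insert x₁ s) ⊆ s' :=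
    Set.insert_subset hz (Set.insert_subset hx₁ hss')
  have hx₂' : x₂ ∉ insert z (insert x₁ s) := by
    simp only [Set.mem_insert_iff, not_or]
    exact ⟨b₂.ne, Ne.symm hne, hx₂s⟩
  have := eq_of_adj_of_induce_connected hsub hconn hs' hx₂ hx₂'
    (Set.mem_insert_of_mem _ (Set.mem_insert_of_mem _ hy₂)) (Set.mem_insert _ _) a₂ b₂
  exact hzs (this ▸ hy₂)

end SimpleGraph

namespace SimpleGraph.Subgraph

variable {V : Type*} {G : SimpleGraph V}

def addPartners (M : G.Subgraph) (A : Set V) (f : V → V) (hf : ∀ x ∈ A, G.Adj x (f x)) :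
    G.Subgraph where
  verts := M.verts ∪ A ∪ f '' A
  Adj a b := M.Adj a b ∨ (a ∈ A ∧ b = f a) ∨ (b ∈ A ∧ a = f b)
  adj_sub := by
    rintro a b (h | ⟨ha, rfl⟩ | ⟨hb, rfl⟩)
    exacts [M.adj_sub h, hf a ha, (hf b hb).symm]
  edge_vert := by
    rintro a b (h | ⟨ha, rfl⟩ | ⟨hb, rfl⟩)
    exacts [Or.inl (Or.inl (M.edge_vert h)), Or.inl (Or.inr ha), Or.inr ⟨b, hb, rfl⟩]
  symm := ⟨fun a b => by
    rintro (h | h | h)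
    exacts [Or.inl h.symm, Or.inr (Or.inr h), Or.inr (Or.inl h)]⟩

variable {M : G.Subgraph} {A : Set V} {f : V → V} {hf : ∀ x ∈ A, G.Adj x (f x)}

lemma le_addPartners : M ≤ M.addPartners A f hf :=
  ⟨fun _ h => Or.inl (Or.inl h), fun _ _ h => Or.inl h⟩

lemma addPartners_adj_apply {x : V} (hx : x ∈ A) : (M.addPartners A f hf).Adj x (f x) :=
  Or.inr (Or.inl ⟨hx, rfl⟩)

lemma IsMatching.addPartners (hM : M.IsMatching) (hA : ∀ x ∈ A, x ∉ M.verts)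
    (hfM : ∀ x ∈ A, f x ∉ M.verts) (hfA : ∀ x ∈ A, f x ∉ A) (hinj : Set.InjOn f A) :
    (M.addPartners A f hf).IsMatching := by
  rintro v ((hv | hv) | ⟨x, hx, rfl⟩)
  · obtain ⟨w, hw, huniq⟩ := hM hv
    refine ⟨w, Or.inl hw, ?_⟩
    rintro y (h | ⟨hvA, -⟩ | ⟨hy, rfl⟩)
    exacts [huniq y h, absurd hv (hA v hvA), absurd hv (hfM y hy)]
  · refine ⟨f v, addPartners_adj_apply hv, ?_⟩
    rintro y (h | ⟨-, rfl⟩ | ⟨hy, rfl⟩)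
    exacts [absurd (M.edge_vert h) (hA v hv), rfl, absurd hv (hfA y hy)]
  · refine ⟨x, Or.inr (Or.inr ⟨hx, rfl⟩), ?_⟩
    rintro y (h | ⟨hfx, -⟩ | ⟨hy, hxy⟩)
    exacts [absurd (M.edge_vert h) (hfM x hx), absurd hfx (hfA x hx), hinj hy hx hxy.symm]

lemma eqOn_of_addPartners_eq {g : V → V} {hg : ∀ x ∈ A, G.Adj x (g x)}
    (hA : ∀ x ∈ A, x ∉ M.verts) (hgA : ∀ x ∈ A, g x ∉ A)
    (h : M.addPartners A f hf = M.addPartners A g hg) : Set.EqOn f g A := by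
  intro x hx
  have hadj := addPartners_adj_apply (M := M) (hf := hf) hx
  rw [h] at hadj
  rcases hadj with h | ⟨-, h⟩ | ⟨hfx, hxg⟩
  exacts [absurd (M.edge_vert h) (hA x hx), h, absurd (hxg ▸ hx) (hgA _ hfx)]

lemma IsMatching.eq_addPartners {M' : G.Subgraph} (hM' : M'.IsMatching) (hle : M ≤ M')
    (hf' : ∀ x ∈ A, M'.Adj x (f x)) (hedge : ∀ a b, M'.Adj a b → M.Adj a b ∨ a ∈ A ∨ b ∈ A) :
    M' = M.addPartners A f (fun x hx => (hf' x hx).adj_sub) := by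
  ext v w
  · constructor
    · intro hv
      obtain ⟨w, hw, -⟩ := hM' hv
      rcases hedge v w hw with h | h | h
      · exact Or.inl (Or.inl (M.edge_vert h))
      · exact Or.inl (Or.inr h)
      · exact Or.inr ⟨w, h, hM'.eq_of_adj_left (hf' w h) hw.symm⟩
    · rintro ((hv | hv) | ⟨x, hx, rfl⟩)
      exacts [hle.1 hv, M'.edge_vert (hf' v hv), M'.edge_vert (hf' x hx).symm]
  · constructor
    · intro h
      rcases hedge v w h with h' | hv | hw
      · exact Or.inl h'
      · exact Or.inr (Or.inl ⟨hv, hM'.eq_of_adj_left h (hf' v hv)⟩)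
      · exact Or.inr (Or.inr ⟨hw, hM'.eq_of_adj_left h.symm (hf' w hw)⟩)
    · rintro (h | ⟨hv, rfl⟩ | ⟨hw, rfl⟩)
      exacts [hle.2 h, hf' v hv, (hf' w hw).symm]

end SimpleGraph.Subgraph

namespace Lgraph

variable {n k : ℕ}

lemma adj_iff_of_card_eq {Y Z : Finset (Fin n)} (hY : Y.card = k) :
    (Lgraph n k).Adj Y Z ↔ Z.card = k + 1 ∧ Y ⊆ Z := by
  refine ⟨?_, fun ⟨hZ, hYZ⟩ => Or.inl ⟨hY, hZ, hYZ⟩⟩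
  rintro (⟨-, hZ, hYZ⟩ | ⟨-, hY', -⟩)
  exacts [⟨hZ, hYZ⟩, by omega]

lemma adj_iff_of_card_eq_succ {X Z : Finset (Fin n)} (hX : X.card = k + 1) :
    (Lgraph n k).Adj X Z ↔ Z.card = k ∧ Z ⊆ X := by
  rw [(Lgraph n k).adj_comm]
  refine ⟨?_, fun ⟨hZ, hZX⟩ => Or.inl ⟨hZ, hX, hZX⟩⟩
  rintro (⟨hZ, -, hZX⟩ | ⟨hX', -, -⟩)
  exacts [⟨hZ, hZX⟩, by omega]

lemma card_eq_succ_of_adj {X Z : Finset (Fin n)} (h : (Lgraph n k).Adj X Z) :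
    X.card = k + 1 ∨ Z.card = k + 1 := by
  rcases h with ⟨-, h, -⟩ | ⟨-, h, -⟩
  exacts [Or.inr h, Or.inl h]

structure IsAnchoredExtension (k : ℕ) (t t' : Finset (Finset (Fin n))) : Prop where
  subset : t ⊆ t'
  connected : ((Lgraph n k).induce (t : Set (Finset (Fin n)))).Connected
  acyclic : ((Lgraph n k).induce (t' : Set (Finset (Fin n)))).IsAcyclic
  faces_mem : ∀ X ∈ t', X.card = k + 1 → ∀ Y ⊆ X, Y.card = k → Y ∈ t'
  exists_adj : ∀ X ∈ t', X.card = k + 1 → X ∉ t → ∃ Y ∈ t, (Lgraph n k).Adj X Y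

/-- The set `V_k(T') \ V_k(T)`. -/
def newUpper (k : ℕ) (t t' : Finset (Finset (Fin n))) : Finset (Finset (Fin n)) :=
  (t' \ t).filter (·.card = k + 1)

def newUpperOver (k : ℕ) (t t' : Finset (Finset (Fin n))) (Y : Finset (Fin n)) :
    Finset (Finset (Fin n)) :=
  (newUpper k t t').filter (Y ⊆ ·)

def freeFaces (k : ℕ) (t : Finset (Finset (Fin n))) (X : Finset (Fin n)) :
    Finset (Finset (Fin n)) :=
  (X.powersetCard k).filter (· ∉ t)

variable {t t' : Finset (Finset (Fin n))}

lemma mem_newUpper {X : Finset (Fin n)} :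
    X ∈ newUpper k t t' ↔ X ∈ t' ∧ X ∉ t ∧ X.card = k + 1 := by
  simp [newUpper, and_assoc]

lemma mem_newUpperOver {X Y : Finset (Fin n)} :
    X ∈ newUpperOver k t t' Y ↔ X ∈ newUpper k t t' ∧ Y ⊆ X :=
  mem_filter

lemma mem_freeFaces {X Z : Finset (Fin n)} :
    Z ∈ freeFaces k t X ↔ (Z ⊆ X ∧ Z.card = k) ∧ Z ∉ t := by
  rw [freeFaces, mem_filter, mem_powersetCard]

lemma degIn_sub_degIn (htt' : t ⊆ t') {Y : Finset (Fin n)} (hY : Y.card = k) :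
    degIn n k t' Y - degIn n k t Y = (newUpperOver k t t' Y).card := by
  have hdeg : ∀ s : Finset (Finset (Fin n)), s.filter (fun Z => (Lgraph n k).Adj Y Z) =
      s.filter (fun Z => Z.card = k + 1 ∧ Y ⊆ Z) :=
    fun s => filter_congr fun Z _ => adj_iff_of_card_eq hY
  have hnew : newUpperOver k t t' Y = t'.filter (fun Z => Z.card = k + 1 ∧ Y ⊆ Z) \
      t.filter (fun Z => Z.card = k + 1 ∧ Y ⊆ Z) := by
    ext X
    simp only [newUpperOver, newUpper, mem_filter, mem_sdiff]
    tauto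
  rw [degIn, degIn, hdeg, hdeg, hnew, card_sdiff_of_subset (filter_subset_filter _ htt')]

namespace IsAnchoredExtension

variable {X Y : Finset (Fin n)}

lemma exists_anchor (h : IsAnchoredExtension k t t') (hX : X ∈ newUpper k t t') :
    ∃ Y ∈ t, Y.card = k ∧ Y ⊆ X := by
  obtain ⟨hXt', hXt, hXc⟩ := mem_newUpper.mp hX
  obtain ⟨Y, hY, hXY⟩ := h.exists_adj X hXt' hXc hXt
  exact ⟨Y, hY, (adj_iff_of_card_eq_succ hXc).mp hXY⟩

lemma anchor_unique (h : IsAnchoredExtension k t t') {Y₁ Y₂ : Finset (Fin n)}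
    (hX : X ∈ newUpper k t t') (hY₁ : Y₁ ∈ t) (hY₂ : Y₂ ∈ t) (hY₁c : Y₁.card = k)
    (hY₂c : Y₂.card = k) (hY₁X : Y₁ ⊆ X) (hY₂X : Y₂ ⊆ X) : Y₁ = Y₂ := by
  obtain ⟨hXt', hXt, hXc⟩ := mem_newUpper.mp hX
  exact SimpleGraph.eq_of_adj_of_induce_connected (coe_subset.mpr h.subset) h.connected
    h.acyclic hXt' hXt hY₁ hY₂ ((adj_iff_of_card_eq_succ hXc).mpr ⟨hY₁c, hY₁X⟩)
    ((adj_iff_of_card_eq_succ hXc).mpr ⟨hY₂c, hY₂X⟩)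

lemma eq_of_common_free_face (h : IsAnchoredExtension k t t') {X₁ X₂ Z : Finset (Fin n)}
    (hX₁ : X₁ ∈ newUpper k t t') (hX₂ : X₂ ∈ newUpper k t t') (hZt : Z ∉ t) (hZc : Z.card = k)
    (hZX₁ : Z ⊆ X₁) (hZX₂ : Z ⊆ X₂) : X₁ = X₂ := by
  obtain ⟨hX₁t', -, hX₁c⟩ := mem_newUpper.mp hX₁
  obtain ⟨hX₂t', hX₂t, hX₂c⟩ := mem_newUpper.mp hX₂
  obtain ⟨Y₁, hY₁, hY₁c, hY₁X⟩ := h.exists_anchor hX₁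
  obtain ⟨Y₂, hY₂, hY₂c, hY₂X⟩ := h.exists_anchor hX₂
  exact SimpleGraph.eq_of_adj_of_adj_of_induce_connected (coe_subset.mpr h.subset) h.connected
    h.acyclic hX₁t' hX₂t' (h.faces_mem X₁ hX₁t' hX₁c Z hZX₁ hZc) hX₂t hZt hY₁ hY₂
    ((adj_iff_of_card_eq_succ hX₁c).mpr ⟨hY₁c, hY₁X⟩)
    ((adj_iff_of_card_eq_succ hX₂c).mpr ⟨hY₂c, hY₂X⟩)
    ((adj_iff_of_card_eq_succ hX₁c).mpr ⟨hZc, hZX₁⟩)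
    ((adj_iff_of_card_eq_succ hX₂c).mpr ⟨hZc, hZX₂⟩)

lemma powersetCard_eq_insert_freeFaces (h : IsAnchoredExtension k t t')
    (hX : X ∈ newUpperOver k t t' Y) (hY : Y ∈ t) (hYc : Y.card = k) :
    X.powersetCard k = insert Y (freeFaces k t X) := by
  obtain ⟨hXU, hYX⟩ := mem_newUpperOver.mp hX
  ext Z
  rw [mem_insert, mem_freeFaces, mem_powersetCard]
  constructor
  · rintro ⟨hZX, hZc⟩
    by_cases hZt : Z ∈ t
    · exact Or.inl (h.anchor_unique hXU hZt hY hZc hYc hZX hYX)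
    · exact Or.inr ⟨⟨hZX, hZc⟩, hZt⟩
  · rintro (rfl | ⟨hZ, -⟩)
    exacts [⟨hYX, hYc⟩, hZ]

lemma card_freeFaces (h : IsAnchoredExtension k t t') (hX : X ∈ newUpperOver k t t' Y)
    (hY : Y ∈ t) (hYc : Y.card = k) : (freeFaces k t X).card = k := by
  have hXc := (mem_newUpper.mp (mem_newUpperOver.mp hX).1).2.2
  have := congrArg card (h.powersetCard_eq_insert_freeFaces hX hY hYc)
  rw [card_powersetCard, hXc, Nat.choose_succ_self_right,
    card_insert_of_notMem fun hY' => (mem_freeFaces.mp hY').2 hY] at this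
  omega

lemma pairwiseDisjoint_freeFaces (h : IsAnchoredExtension k t t') :
    (newUpper k t t' : Set (Finset (Fin n))).PairwiseDisjoint (freeFaces k t) := by
  intro X₁ hX₁ X₂ hX₂ hne
  refine disjoint_left.mpr fun Z hZ₁ hZ₂ => hne ?_
  rw [mem_freeFaces] at hZ₁ hZ₂
  exact h.eq_of_common_free_face hX₁ hX₂ hZ₁.2 hZ₁.1.2 hZ₁.1.1 hZ₂.1.1

lemma pairwiseDisjoint_newUpperOver (h : IsAnchoredExtension k t t') :
    (t.filter (·.card = k) : Set (Finset (Fin n))).PairwiseDisjoint (newUpperOver k t t') := by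
  intro Y₁ hY₁ Y₂ hY₂ hne
  refine disjoint_left.mpr fun X hX₁ hX₂ => hne ?_
  simp only [mem_coe, mem_filter] at hY₁ hY₂
  rw [mem_newUpperOver] at hX₁ hX₂
  exact h.anchor_unique hX₁.1 hY₁.1 hY₂.1 hY₁.2 hY₂.2 hX₁.2 hX₂.2

lemma biUnion_newUpperOver (h : IsAnchoredExtension k t t') :
    (t.filter (·.card = k)).biUnion (newUpperOver k t t') = newUpper k t t' := by
  ext X
  simp only [mem_biUnion, mem_filter, mem_newUpperOver]
  refine ⟨fun ⟨_, _, hX, _⟩ => hX, fun hX => ?_⟩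
  obtain ⟨Y, hY, hYc, hYX⟩ := h.exists_anchor hX
  exact ⟨Y, ⟨hY, hYc⟩, hX, hYX⟩

lemma anchor_eq_of_not_disjoint (h : IsAnchoredExtension k t t')
    {Y₁ Y₂ X₁ X₂ : Finset (Fin n)} (hY₁ : Y₁ ∈ t) (hY₁c : Y₁.card = k) (hY₂ : Y₂ ∈ t)
    (hY₂c : Y₂.card = k) (hX₁ : X₁ ∈ newUpperOver k t t' Y₁) (hX₂ : X₂ ∈ newUpperOver k t t' Y₂)
    (hX : ¬ Disjoint (X₁.powersetCard k) (X₂.powersetCard k)) : Y₁ = Y₂ := by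
  obtain ⟨Z, hZ₁, hZ₂⟩ := not_disjoint_iff.mp hX
  rw [mem_powersetCard] at hZ₁ hZ₂
  rw [mem_newUpperOver] at hX₁ hX₂
  by_cases hZt : Z ∈ t
  · exact (h.anchor_unique hX₁.1 hY₁ hZt hY₁c hZ₁.2 hX₁.2 hZ₁.1).trans
      (h.anchor_unique hX₂.1 hZt hY₂ hZ₂.2 hY₂c hZ₂.1 hX₂.2)
  · obtain rfl := h.eq_of_common_free_face hX₁.1 hX₂.1 hZt hZ₁.2 hZ₁.1 hZ₂.1
    exact h.anchor_unique hX₁.1 hY₁ hY₂ hY₁c hY₂c hX₁.2 hX₂.2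

end IsAnchoredExtension

variable {M : (Lgraph n k).Subgraph}

lemma adj_matchingExtension_cases (hM : M.IsMatching)
    (hMc : ∀ Z ∈ t, Z.card = k + 1 → Z ∈ M.verts) {M' : (Lgraph n k).Subgraph}
    (hM' : M'.IsMatching) (hM't' : M'.verts ⊆ t') (hle : M ≤ M') {a b : Finset (Fin n)}
    (hab : M'.Adj a b) : M.Adj a b ∨ a ∈ newUpper k t t' ∨ b ∈ newUpper k t t' := by
  have key : ∀ a b, M'.Adj a b → a.card = k + 1 → M.Adj a b ∨ a ∈ newUpper k t t' := by
    intro a b hab ha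
    by_cases hat : a ∈ t
    · obtain ⟨u, hu, -⟩ := hM (hMc a hat ha)
      exact Or.inl (hM'.eq_of_adj_left (hle.2 hu) hab ▸ hu)
    · exact Or.inr (mem_newUpper.mpr ⟨hM't' (M'.edge_vert hab), hat, ha⟩)
  rcases card_eq_succ_of_adj (M'.adj_sub hab) with ha | hb
  · exact (key a b hab ha).imp id Or.inl
  · exact (key b a hab.symm hb).imp (fun h => h.symm) Or.inr

variable [DecidablePred (· ∈ M.verts)]

lemma adj_of_isInjChoice {f : Finset (Fin n) → Finset (Fin n)}
    (hf : IsInjChoice (newUpper k t t') (fun X => (X.powersetCard k).filter (· ∉ M.verts)) ∅ f)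
    {X : Finset (Fin n)} (hX : X ∈ newUpper k t t') :
    (Lgraph n k).Adj X (f X) ∧ f X ∉ M.verts := by
  obtain ⟨hfX, hfM⟩ := mem_filter.mp (hf.1 X hX)
  exact ⟨(adj_iff_of_card_eq_succ (mem_newUpper.mp hX).2.2).mpr (mem_powersetCard.mp hfX).symm,
    hfM⟩

lemma addPartners_mem_matchingExtensions (hM : M.IsMatching) (hMt : M.verts ⊆ t)
    (hMc : ∀ Z ∈ t, Z.card = k + 1 → Z ∈ M.verts) (htt' : t ⊆ t')
    (ht'faces : ∀ X ∈ t', X.card = k + 1 → ∀ Y ⊆ X, Y.card = k → Y ∈ t')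
    {f : Finset (Fin n) → Finset (Fin n)}
    (hf : IsInjChoice (newUpper k t t') (fun X => (X.powersetCard k).filter (· ∉ M.verts)) ∅ f) :
    M.addPartners (newUpper k t t') f (fun _ hX => (adj_of_isInjChoice hf hX).1) ∈
      {M' : (Lgraph n k).Subgraph | M'.IsMatching ∧ M'.verts ⊆ ↑t' ∧
        (∀ Z ∈ t', Z.card = k + 1 → Z ∈ M'.verts) ∧ M ≤ M'} := by
  have hfc : ∀ X ∈ newUpper k t t', f X ⊆ X ∧ (f X).card = k := fun X hX =>
    ((adj_iff_of_card_eq_succ (mem_newUpper.mp hX).2.2).mp (adj_of_isInjChoice hf hX).1).symm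
  refine ⟨hM.addPartners (fun X hX hXM => (mem_newUpper.mp hX).2.1 (hMt hXM))
      (fun X hX => (adj_of_isInjChoice hf hX).2) (fun X hX hfX => ?_) hf.2.1, ?_, ?_,
    SimpleGraph.Subgraph.le_addPartners⟩
  · have := (mem_newUpper.mp hfX).2.2
    have := (hfc X hX).2
    omega
  · rintro v ((hv | hv) | ⟨X, hX, rfl⟩)
    · exact htt' (hMt hv)
    · exact (mem_newUpper.mp hv).1
    · obtain ⟨hXt', -, hXc⟩ := mem_newUpper.mp hX
      exact ht'faces X hXt' hXc _ (hfc X hX).1 (hfc X hX).2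
  · intro Z hZ hZc
    by_cases hZt : Z ∈ t
    · exact Or.inl (Or.inl (hMc Z hZt hZc))
    · exact Or.inl (Or.inr (mem_newUpper.mpr ⟨hZ, hZt, hZc⟩))

lemma exists_addPartners_eq (hM : M.IsMatching) (hMt : M.verts ⊆ t)
    (hMc : ∀ Z ∈ t, Z.card = k + 1 → Z ∈ M.verts) {M' : (Lgraph n k).Subgraph}
    (hM' : M'.IsMatching) (hM't' : M'.verts ⊆ t')
    (hM'c : ∀ Z ∈ t', Z.card = k + 1 → Z ∈ M'.verts) (hle : M ≤ M') :
    ∃ f, ∃ hf : IsInjChoice (newUpper k t t')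
        (fun X => (X.powersetCard k).filter (· ∉ M.verts)) ∅ f,
      M.addPartners (newUpper k t t') f (fun _ hX => (adj_of_isInjChoice hf hX).1) = M' := by
  have hA : ∀ X ∈ newUpper k t t', ∃ Y, M'.Adj X Y := fun X hX =>
    (hM' (hM'c X (mem_newUpper.mp hX).1 (mem_newUpper.mp hX).2.2)).exists
  choose! p hp using hA
  let f : Finset (Fin n) → Finset (Fin n) := fun X => if X ∈ newUpper k t t' then p X else ∅
  have hf : ∀ X ∈ newUpper k t t', M'.Adj X (f X) := fun X hX => by simpa [f, hX] using hp X hX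
  have hfC : IsInjChoice (newUpper k t t') (fun X => (X.powersetCard k).filter (· ∉ M.verts))
      ∅ f := by
    refine ⟨fun X hX => ?_, fun X hX X' hX' e => hM'.eq_of_adj_right (hf X hX) (e ▸ hf X' hX'),
      fun X hX => if_neg hX⟩
    obtain ⟨hfc, hfX⟩ :=
      (adj_iff_of_card_eq_succ (mem_newUpper.mp hX).2.2).mp (M'.adj_sub (hf X hX))
    refine mem_filter.mpr ⟨mem_powersetCard.mpr ⟨hfX, hfc⟩, fun hfM => ?_⟩
    obtain ⟨w, hw, -⟩ := hM hfM
    have hXM : X ∈ M.verts := hM'.eq_of_adj_left (hle.2 hw) (hf X hX).symm ▸ M.edge_vert hw.symm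
    exact (mem_newUpper.mp hX).2.1 (hMt hXM)
  exact ⟨f, hfC, (hM'.eq_addPartners hle hf
    fun a b hab => adj_matchingExtension_cases hM hMc hM' hM't' hle hab).symm⟩

theorem ncard_matchingExtensions_eq_funCount (hM : M.IsMatching) (hMt : M.verts ⊆ t)
    (hMc : ∀ Z ∈ t, Z.card = k + 1 → Z ∈ M.verts) (htt' : t ⊆ t')
    (ht'faces : ∀ X ∈ t', X.card = k + 1 → ∀ Y ⊆ X, Y.card = k → Y ∈ t') :
    Set.ncard {M' : (Lgraph n k).Subgraph |
        M'.IsMatching ∧ M'.verts ⊆ ↑t' ∧ (∀ Z ∈ t', Z.card = k + 1 → Z ∈ M'.verts) ∧ M ≤ M'} =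
      funCount (IsInjChoice (newUpper k t t') (fun X => (X.powersetCard k).filter (· ∉ M.verts))
        ∅) := by
  let Θ : {f // IsInjChoice (newUpper k t t')
      (fun X => (X.powersetCard k).filter (· ∉ M.verts)) ∅ f} → (Lgraph n k).Subgraph :=
    fun f => M.addPartners (newUpper k t t') f.1 (fun _ hX => (adj_of_isInjChoice f.2 hX).1)
  have hΘ : Function.Injective Θ := fun f g hfg => Subtype.ext <| funext fun X =>
    if hX : X ∈ newUpper k t t' then
      SimpleGraph.Subgraph.eqOn_of_addPartners_eq
        (fun X hX hXM => (mem_newUpper.mp hX).2.1 (hMt hXM))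
        (fun X hX hgX => by
          have := (mem_newUpper.mp hgX).2.2
          have := (adj_iff_of_card_eq_succ (mem_newUpper.mp hX).2.2).mp
            (adj_of_isInjChoice g.2 hX).1
          omega) hfg hX
    else (f.2.2.2 X hX).trans (g.2.2.2 X hX).symm
  rw [funCount, ← Set.ncard_range_of_injective hΘ]
  congr 1
  ext M'
  refine ⟨fun ⟨hM', hM't', hM'c, hle⟩ => ?_, ?_⟩
  · obtain ⟨f, hf, rfl⟩ := exists_addPartners_eq hM hMt hMc hM' hM't' hM'c hle
    exact ⟨⟨f, hf⟩, rfl⟩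
  · rintro ⟨f, rfl⟩
    exact addPartners_mem_matchingExtensions hM hMt hMc htt' ht'faces f.2

namespace IsAnchoredExtension

variable {X Y : Finset (Fin n)}

lemma filter_powersetCard_of_mem (h : IsAnchoredExtension k t t') (hMt : M.verts ⊆ t)
    (hX : X ∈ newUpperOver k t t' Y) (hY : Y ∈ t) (hYc : Y.card = k) (hYM : Y ∈ M.verts) :
    (X.powersetCard k).filter (· ∉ M.verts) = freeFaces k t X := by
  rw [h.powersetCard_eq_insert_freeFaces hX hY hYc, filter_insert, if_neg (not_not.mpr hYM),
    filter_true_of_mem (p := (· ∉ M.verts)) fun Z hZ hZM => (mem_freeFaces.mp hZ).2 (hMt hZM)]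

lemma filter_powersetCard_of_not_mem (h : IsAnchoredExtension k t t') (hMt : M.verts ⊆ t)
    (hX : X ∈ newUpperOver k t t' Y) (hY : Y ∈ t) (hYc : Y.card = k) (hYM : Y ∉ M.verts) :
    (X.powersetCard k).filter (· ∉ M.verts) = insert Y (freeFaces k t X) := by
  rw [h.powersetCard_eq_insert_freeFaces hX hY hYc, filter_insert, if_pos hYM,
    filter_true_of_mem (p := (· ∉ M.verts)) fun Z hZ hZM => (mem_freeFaces.mp hZ).2 (hMt hZM)]

lemma funCount_newUpperOver_of_mem (h : IsAnchoredExtension k t t') (hMt : M.verts ⊆ t)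
    (hY : Y ∈ t) (hYc : Y.card = k) (hYM : Y ∈ M.verts) :
    funCount (IsInjChoice (newUpperOver k t t' Y)
        (fun X => (X.powersetCard k).filter (· ∉ M.verts)) ∅) =
      k ^ (newUpperOver k t t' Y).card := by
  have hsub : (newUpperOver k t t' Y : Set (Finset (Fin n))) ⊆ newUpper k t t' :=
    fun X hX => (mem_newUpperOver.mp hX).1
  rw [funCount_congr (isInjChoice_congr
      (fun X hX => h.filter_powersetCard_of_mem hMt hX hY hYc hYM) ∅),
    funCount_isInjChoice_of_pairwiseDisjoint (h.pairwiseDisjoint_freeFaces.subset hsub),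
    prod_congr rfl fun X hX => h.card_freeFaces hX hY hYc, prod_const]

lemma funCount_newUpperOver_of_not_mem (h : IsAnchoredExtension k t t') (hMt : M.verts ⊆ t)
    (hY : Y ∈ t) (hYc : Y.card = k) (hYM : Y ∉ M.verts) :
    funCount (IsInjChoice (newUpperOver k t t' Y)
        (fun X => (X.powersetCard k).filter (· ∉ M.verts)) ∅) =
      (newUpperOver k t t' Y).card * k ^ ((newUpperOver k t t' Y).card - 1) +
        k ^ (newUpperOver k t t' Y).card := by
  have hsub : (newUpperOver k t t' Y : Set (Finset (Fin n))) ⊆ newUpper k t t' :=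
    fun X hX => (mem_newUpperOver.mp hX).1
  have hL : ∀ X ∈ newUpperOver k t t' Y, (freeFaces k t X).card = k :=
    fun X hX => h.card_freeFaces hX hY hYc
  rw [funCount_congr (isInjChoice_congr
      (fun X hX => h.filter_powersetCard_of_not_mem hMt hX hY hYc hYM) ∅),
    funCount_isInjChoice_insert (h.pairwiseDisjoint_freeFaces.subset hsub)
      (fun X _ hYX => (mem_freeFaces.mp hYX).2 hY),
    prod_congr rfl hL, prod_const, add_comm,
    sum_congr rfl fun X hX => by
      rw [prod_congr rfl fun X' hX' => hL X' (mem_of_mem_erase hX'), prod_const,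
        card_erase_of_mem hX],
    sum_const, smul_eq_mul]

end IsAnchoredExtension

end Lgraph

theorem stmt10_general (n k : ℕ)
    (t t' : Finset (Finset (Fin n)))
    (ht : IsProperSubtree n k t) (ht' : IsProperSubtree n k t') (htt' : t ⊆ t')
    (hnb : ∀ X ∈ t', X.card = k + 1 → X ∉ t → ∃ Y ∈ t, (Lgraph n k).Adj X Y)
    (M : (Lgraph n k).Subgraph) (hM : M.IsMatching) (hMt : M.verts ⊆ ↑t)
    (hMc : ∀ Z ∈ t, Z.card = k + 1 → Z ∈ M.verts)
    (U : Finset (Finset (Fin n)))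
    (hU : ∀ Z, Z ∈ U ↔ Z ∈ t ∧ Z.card = k ∧ Z ∉ M.verts) :
    Set.ncard {M' : (Lgraph n k).Subgraph |
        M'.IsMatching ∧ M'.verts ⊆ ↑t' ∧ (∀ Z ∈ t', Z.card = k + 1 → Z ∈ M'.verts) ∧
        M ≤ M'}
      = (∏ Y ∈ U,
          ((degIn n k t' Y - degIn n k t Y) * k ^ (degIn n k t' Y - degIn n k t Y - 1)
            + k ^ (degIn n k t' Y - degIn n k t Y))) *
        (∏ Y ∈ (t.filter (fun Z => Z.card = k)) \ U,
          k ^ (degIn n k t' Y - degIn n k t Y)) := by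
  classical
  have h : Lgraph.IsAnchoredExtension k t t' :=
    ⟨htt', ht.2.1.connected, ht'.2.1.isAcyclic, ht'.2.2, hnb⟩
  have hUB : U ⊆ t.filter (fun Z => Z.card = k) :=
    fun Y hY => mem_filter.mpr ⟨((hU Y).mp hY).1, ((hU Y).mp hY).2.1⟩
  rw [Lgraph.ncard_matchingExtensions_eq_funCount hM hMt hMc htt' ht'.2.2,
    ← h.biUnion_newUpperOver, funCount_isInjChoice_biUnion _ _ h.pairwiseDisjoint_newUpperOver _
      (fun Y hY Y' hY' X hX X' hX' hXX' => h.anchor_eq_of_not_disjoint (mem_filter.mp hY).1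
        (mem_filter.mp hY).2 (mem_filter.mp hY').1 (mem_filter.mp hY').2 hX hX'
        fun hd => hXX' (hd.mono (filter_subset _ _) (filter_subset _ _))),
    ← prod_sdiff hUB, mul_comm]
  congr 1
  · refine prod_congr rfl fun Y hY => ?_
    obtain ⟨hYt, hYc, hYM⟩ := (hU Y).mp hY
    rw [h.funCount_newUpperOver_of_not_mem hMt hYt hYc hYM, Lgraph.degIn_sub_degIn htt' hYc]
  · refine prod_congr rfl fun Y hY => ?_
    obtain ⟨⟨hYt, hYc⟩, hYU⟩ := mem_sdiff.mp hY |>.imp_left mem_filter.mp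
    rw [h.funCount_newUpperOver_of_mem hMt hYt hYc
        (by_contra fun hYM => hYU ((hU Y).mpr ⟨hYt, hYc, hYM⟩)),
      Lgraph.degIn_sub_degIn htt' hYc]

/-- Let `T ⊆ T'` be proper subtrees of `L_{n,k}` (vertex sets `t ⊆ t'`) such that every
`X ∈ V_k(T')∖V_k(T)` has a neighbor in `V(T)`. Let `M` be a complete matching of `T`,
`U` the set of vertices of `V_{k-1}(T)` not covered by `M`, and
`Δ(Y) = deg_{T'}(Y) − deg_T(Y)`. Then the number of complete matchings `M'` of `T'` with
`M ⊆ M'` equals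
`(∏_{Y∈U} (Δ(Y)·k^{Δ(Y)−1} + k^{Δ(Y)})) · (∏_{Y∈V_{k-1}(T)∖U} k^{Δ(Y)})`. -/
theorem stmt10 (n k : ℕ) (hk : 1 ≤ k) (hkn : k < n)
    (t t' : Finset (Finset (Fin n)))
    (ht : IsProperSubtree n k t) (ht' : IsProperSubtree n k t') (htt' : t ⊆ t')
    (hnb : ∀ X ∈ t', X.card = k + 1 → X ∉ t → ∃ Y ∈ t, (Lgraph n k).Adj X Y)
    (M : (Lgraph n k).Subgraph) (hM : M.IsMatching) (hMt : M.verts ⊆ ↑t)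
    (hMc : ∀ Z ∈ t, Z.card = k + 1 → Z ∈ M.verts)
    (U : Finset (Finset (Fin n)))
    (hU : ∀ Z, Z ∈ U ↔ Z ∈ t ∧ Z.card = k ∧ Z ∉ M.verts) :
    Set.ncard {M' : (Lgraph n k).Subgraph |
        M'.IsMatching ∧ M'.verts ⊆ ↑t' ∧ (∀ Z ∈ t', Z.card = k + 1 → Z ∈ M'.verts) ∧
        M ≤ M'}
      = (∏ Y ∈ U,
          ((degIn n k t' Y - degIn n k t Y) * k ^ (degIn n k t' Y - degIn n k t Y - 1)
            + k ^ (degIn n k t' Y - degIn n k t Y))) *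
        (∏ Y ∈ (t.filter (fun Z => Z.card = k)) \ U,
          k ^ (degIn n k t' Y - degIn n k t Y)) :=
  stmt10_general n k t t' ht ht' htt' hnb M hM hMt hMc U hU
end
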